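/- arXiv:2410.21467 — 12 statements merged into one kernel-verified Lean document; each statement's English description precedes it below -/
import Mathlib

section
/- Let 𝕄 ⊆ ℝ^n be a set, A ∈ ℝ^{m×n}, b ∈ ℝ^m, and let X ⊆ {x ∈ 𝕄 : Ax ≤ b} be a set such that conv(X) ∩ 𝕄 = X. Assume that T = {x ∈ conv(X) : Ax = b} is nonempty (it is then a face of conv(X), since Ax ≤ b holds on conv(X)). Then conv(X) ∩ T = conv(T ∩ 𝕄). -/
open Matrix

/-- Lemma on integer hulls of faces: if `X ⊆ {x ∈ 𝕄 : Ax ≤ b}` satisfies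
`conv(X) ∩ 𝕄 = X` and the face `T = {x ∈ conv(X) : Ax = b}` is nonempty, then
`conv(X) ∩ T = conv(T ∩ 𝕄)`. -/
theorem integer_hull_face {n m : ℕ} (𝕄 X : Set (Fin n → ℝ))
    (A : Matrix (Fin m) (Fin n) ℝ) (b : Fin m → ℝ)
    (hX : X ⊆ {x ∈ 𝕄 | ∀ i, A.mulVec x i ≤ b i})
    (hconv : convexHull ℝ X ∩ 𝕄 = X)
    (T : Set (Fin n → ℝ))
    (hT : T = {x ∈ convexHull ℝ X | A.mulVec x = b})
    (hTne : T.Nonempty) :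
    convexHull ℝ X ∩ T = convexHull ℝ (T ∩ 𝕄) := by
  have hTsub : T ⊆ convexHull ℝ X := by rw [hT]; exact fun x hx => hx.1
  rw [Set.inter_eq_self_of_subset_right hTsub]
  have hTconv : Convex ℝ T := by
    rw [hT]
    have : {x | x ∈ convexHull ℝ X ∧ A.mulVec x = b}
        = convexHull ℝ X ∩ (A.mulVecLin ⁻¹' {b}) := by
      ext x; simp [Matrix.mulVecLin_apply]
    rw [this]
    exact (convex_convexHull ℝ X).inter ((convex_singleton b).linear_preimage _)
  apply Set.Subset.antisymm
  · intro x hx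
    have hxT := hx
    rw [hT] at hxT
    obtain ⟨hxc, hxe⟩ := hxT
    rw [convexHull_eq] at hxc
    obtain ⟨ι, t, w, z, hw0, hw1, hzX, hcm⟩ := hxc
    -- sum form
    have hsum : x = ∑ j ∈ t, w j • z j := by
      rw [← hcm, Finset.centerMass_eq_of_sum_1 _ _ hw1]
    have hAx : ∀ i, A.mulVec x i = ∑ j ∈ t, w j * A.mulVec (z j) i := by
      intro i
      have : A.mulVecLin x = ∑ j ∈ t, w j • A.mulVecLin (z j) := by
        rw [hsum, map_sum]
        simp [_root_.map_smul]
      have := congrFun this i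
      simpa [Matrix.mulVecLin_apply, Finset.sum_apply] using this
    have key : ∀ j ∈ t, w j ≠ 0 → A.mulVec (z j) = b := by
      intro j hj hwj
      funext i
      have hle : ∀ k ∈ t, w k * A.mulVec (z k) i ≤ w k * b i := fun k hk =>
        mul_le_mul_of_nonneg_left ((hX (hzX k hk)).2 i) (hw0 k hk)
      have heq : ∑ k ∈ t, w k * A.mulVec (z k) i = ∑ k ∈ t, w k * b i := by
        rw [← hAx i, hxe, ← Finset.sum_mul, hw1, one_mul]
      have := (Finset.sum_eq_sum_iff_of_le hle).mp heq j hj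
      exact mul_left_cancel₀ hwj this
    have hmem : ∀ j ∈ t.filter (fun j => w j ≠ 0), z j ∈ T ∩ 𝕄 := by
      intro j hj
      rw [Finset.mem_filter] at hj
      obtain ⟨hj, hwj⟩ := hj
      have hzx : z j ∈ X := hzX j hj
      refine ⟨?_, (hX hzx).1⟩
      rw [hT]
      exact ⟨subset_convexHull ℝ X hzx, key j hj hwj⟩
    have hx' : (t.filter (fun j => w j ≠ 0)).centerMass w z = x := by
      rw [Finset.centerMass_filter_ne_zero, hcm]
    rw [← hx']
    apply Finset.centerMass_mem_convexHull
    · intro j hj; exact hw0 j (Finset.mem_filter.mp hj).1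
    · rw [Finset.sum_filter_ne_zero, hw1]; norm_num
    · exact hmem
  · exact convexHull_min Set.inter_subset_left hTconv
end

section
/- Let M ⊆ ℤ^{n₁} × ℝ^{n₂} be a monoid, A ∈ ℝ^{m×n₁}, G ∈ ℝ^{m×n₂}, b ∈ ℝ^m, c ∈ ℝ^{n₁}, d ∈ ℝ^{n₂}, and let S ⊆ M^≤(b) satisfy conv(S) ∩ M = S. Assume that T = {(x,y) ∈ ℝ^{n₁} × ℝ^{n₂} : Ax + Gy = b, (x,y) ∈ conv(S)} is nonempty. Then inf{c^Tx + d^Ty : Ax + Gy = b, (x,y) ∈ conv(S)} = inf{c^Tx + d^Ty : Ax + Gy = b, (x,y) ∈ S}. -/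
open Matrix

private lemma dot_sum' {n : ℕ} {ι : Type} (c : Fin n → ℝ) (t : Finset ι) (g : ι → Fin n → ℝ) :
    c ⬝ᵥ (∑ i ∈ t, g i) = ∑ i ∈ t, c ⬝ᵥ g i := by
  simp only [dotProduct, Finset.sum_apply, Finset.mul_sum]
  exact Finset.sum_comm

/-- Optimizing over `conv(S)` equals optimizing over `S`: for a monoid
`M ⊆ ℤ^{n₁} × ℝ^{n₂}` and `S ⊆ M^≤(b)` with `conv(S) ∩ M = S`, if the face
`T = {(x,y) ∈ conv(S) : Ax + Gy = b}` is nonempty, then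
`inf{cᵀx + dᵀy : Ax + Gy = b, (x,y) ∈ conv(S)} = inf{cᵀx + dᵀy : Ax + Gy = b, (x,y) ∈ S}`
(infima taken in the extended reals). -/
theorem opt_convexHull_eq_opt {n₁ n₂ m : ℕ}
    (M : Set ((Fin n₁ → ℝ) × (Fin n₂ → ℝ)))
    (hMzero : (0 : (Fin n₁ → ℝ) × (Fin n₂ → ℝ)) ∈ M)
    (hMadd : ∀ p ∈ M, ∀ q ∈ M, p + q ∈ M)
    (hMint : ∀ p ∈ M, ∀ i, ∃ k : ℤ, p.1 i = (k : ℝ))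
    (A : Matrix (Fin m) (Fin n₁) ℝ) (G : Matrix (Fin m) (Fin n₂) ℝ)
    (b : Fin m → ℝ) (c : Fin n₁ → ℝ) (d : Fin n₂ → ℝ)
    (S : Set ((Fin n₁ → ℝ) × (Fin n₂ → ℝ)))
    (hS : S ⊆ {p ∈ M | ∀ i, A.mulVec p.1 i + G.mulVec p.2 i ≤ b i})
    (hSconv : convexHull ℝ S ∩ M = S)
    (hTne : ∃ p ∈ convexHull ℝ S, A.mulVec p.1 + G.mulVec p.2 = b) :
    sInf ((fun p : (Fin n₁ → ℝ) × (Fin n₂ → ℝ) => ((c ⬝ᵥ p.1 + d ⬝ᵥ p.2 : ℝ) : EReal)) ''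
        {p ∈ convexHull ℝ S | A.mulVec p.1 + G.mulVec p.2 = b}) =
      sInf ((fun p : (Fin n₁ → ℝ) × (Fin n₂ → ℝ) => ((c ⬝ᵥ p.1 + d ⬝ᵥ p.2 : ℝ) : EReal)) ''
        {p ∈ S | A.mulVec p.1 + G.mulVec p.2 = b}) := by
  classical
  have key : ∀ p ∈ convexHull ℝ S, A.mulVec p.1 + G.mulVec p.2 = b →
      ∃ q, (q ∈ S ∧ A.mulVec q.1 + G.mulVec q.2 = b) ∧
        c ⬝ᵥ q.1 + d ⬝ᵥ q.2 ≤ c ⬝ᵥ p.1 + d ⬝ᵥ p.2 := by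
    intro p hpconv hpb
    rw [convexHull_eq] at hpconv
    obtain ⟨ι, t, w, z, hw0, hw1, hzS, hcm⟩ := hpconv
    rw [Finset.centerMass_eq_of_sum_1 _ _ hw1] at hcm
    have hp1 : p.1 = ∑ i ∈ t, w i • (z i).1 := by
      rw [← hcm, Prod.fst_sum]; simp
    have hp2 : p.2 = ∑ i ∈ t, w i • (z i).2 := by
      rw [← hcm, Prod.snd_sum]; simp
    set v : ι → Fin m → ℝ := fun i => A.mulVec (z i).1 + G.mulVec (z i).2 with hv
    have hvle : ∀ i ∈ t, ∀ j, v i j ≤ b j := fun i hi j => (hS (hzS i hi)).2 j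
    have hsum : ∀ j, ∑ i ∈ t, w i * v i j = b j := by
      intro j
      have h1 : A.mulVec p.1 = ∑ i ∈ t, w i • A.mulVec (z i).1 := by
        rw [hp1, ← A.mulVecLin_apply, map_sum]
        simp [Matrix.mulVecLin_apply]
      have h2 : G.mulVec p.2 = ∑ i ∈ t, w i • G.mulVec (z i).2 := by
        rw [hp2, ← G.mulVecLin_apply, map_sum]
        simp [Matrix.mulVecLin_apply]
      have := congrFun hpb j
      rw [h1, h2] at this
      simp only [Pi.add_apply, Finset.sum_apply, Pi.smul_apply, smul_eq_mul] at this
      rw [← this, ← Finset.sum_add_distrib]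
      apply Finset.sum_congr rfl
      intro i _
      simp [hv, mul_add]
    have heq : ∀ i ∈ t, w i ≠ 0 → A.mulVec (z i).1 + G.mulVec (z i).2 = b := by
      intro i hi hwi
      funext j
      have hz : ∑ i ∈ t, w i * (b j - v i j) = 0 := by
        rw [Finset.sum_congr rfl (fun i _ => mul_sub (w i) (b j) (v i j)),
          Finset.sum_sub_distrib, ← Finset.sum_mul, hw1, one_mul, hsum j, sub_self]
      have hnn : ∀ i ∈ t, 0 ≤ w i * (b j - v i j) := fun i hi =>
        mul_nonneg (hw0 i hi) (sub_nonneg.2 (hvle i hi j))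
      have h0 := (Finset.sum_eq_zero_iff_of_nonneg hnn).1 hz i hi
      have hb : b j - v i j = 0 := by
        rcases mul_eq_zero.1 h0 with h | h
        · exact absurd h hwi
        · exact h
      have : v i j = b j := by linarith
      simpa [hv] using this
    set t' := t.filter (fun i => w i ≠ 0) with ht'
    have ht'ne : t'.Nonempty := by
      obtain ⟨i, hi, hne⟩ := Finset.exists_ne_zero_of_sum_ne_zero (by rw [hw1]; norm_num :
        ∑ i ∈ t, w i ≠ 0)
      exact ⟨i, Finset.mem_filter.2 ⟨hi, hne⟩⟩
    obtain ⟨i₀, hi₀, hmin⟩ := t'.exists_min_image (fun i => c ⬝ᵥ (z i).1 + d ⬝ᵥ (z i).2) ht'ne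
    obtain ⟨hi₀t, hwi₀⟩ := Finset.mem_filter.1 hi₀
    refine ⟨z i₀, ⟨hzS i₀ hi₀t, heq i₀ hi₀t hwi₀⟩, ?_⟩
    have hobj : c ⬝ᵥ p.1 + d ⬝ᵥ p.2 = ∑ i ∈ t, w i * (c ⬝ᵥ (z i).1 + d ⬝ᵥ (z i).2) := by
      rw [hp1, hp2, dot_sum', dot_sum', ← Finset.sum_add_distrib]
      apply Finset.sum_congr rfl
      intro i _
      rw [dotProduct_smul, dotProduct_smul]
      simp [mul_add]
    have hw1' : ∑ i ∈ t', w i = 1 := by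
      rw [ht', Finset.sum_filter_ne_zero]; exact hw1
    have hsplit : ∑ i ∈ t, w i * (c ⬝ᵥ (z i).1 + d ⬝ᵥ (z i).2)
        = ∑ i ∈ t', w i * (c ⬝ᵥ (z i).1 + d ⬝ᵥ (z i).2) := by
      refine (Finset.sum_subset (Finset.filter_subset _ _) (fun i hi hni => ?_)).symm
      have : w i = 0 := by
        by_contra hwi
        exact hni (Finset.mem_filter.2 ⟨hi, hwi⟩)
      simp [this]
    rw [hobj, hsplit]
    calc c ⬝ᵥ (z i₀).1 + d ⬝ᵥ (z i₀).2
        = ∑ i ∈ t', w i * (c ⬝ᵥ (z i₀).1 + d ⬝ᵥ (z i₀).2) := by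
          rw [← Finset.sum_mul, hw1', one_mul]
      _ ≤ ∑ i ∈ t', w i * (c ⬝ᵥ (z i).1 + d ⬝ᵥ (z i).2) := by
          refine Finset.sum_le_sum fun i hi => ?_
          exact mul_le_mul_of_nonneg_left (hmin i hi) (hw0 i (Finset.filter_subset _ _ hi))
  apply le_antisymm
  · apply sInf_le_sInf
    apply Set.image_mono
    rintro p ⟨hpS, hpb⟩
    exact ⟨subset_convexHull ℝ S hpS, hpb⟩
  · apply le_sInf
    rintro x ⟨p, ⟨hpconv, hpb⟩, rfl⟩
    obtain ⟨q, hq, hle⟩ := key p hpconv hpb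
    refine le_trans (sInf_le ⟨q, hq, rfl⟩) ?_
    simp only []
    exact EReal.coe_le_coe_iff.2 hle
end

section
/- Let M ⊆ ℤ^{n₁} × ℝ^{n₂} be a monoid, A ∈ ℝ^{m×n₁}, G ∈ ℝ^{m×n₂}, c ∈ ℝ^{n₁}, d ∈ ℝ^{n₂}, and let I(M) and I'(M) be two generating sets of M. Let D ⊆ ℝ^m contain Ω = {Au + Gv : (u,v) ∈ M} and let f : D → ℝ be subadditive with f(0) = 0. Then f(Au + Gv) ≤ c^Tu + d^Tv holds for all (u,v) ∈ I(M) if and only if f(Au + Gv) ≤ c^Tu + d^Tv holds for all (u,v) ∈ I'(M). -/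
/-!
Both constraint systems are equivalent to the same constraint on all of `M`. The map
`p ↦ f (A p.1 + G p.2)` is subadditive on `M`, because the linear map `p ↦ A p.1 + G p.2` carries
`M` into the domain `D` of `f`, while the right-hand side `p ↦ c ⬝ᵥ p.1 + d ⬝ᵥ p.2` is additive.
Hence a bound on the generators of `M` propagates along sums to every element of `M`, and in
particular to the elements of any other generating set.
-/

open Matrix

/-- `I` is a generating set of the monoid `M`: `I ⊆ M` and every element of `M`
is a finite nonnegative-integer combination of elements of `I`. -/
def IsGenSet {V : Type*} [AddCommMonoid V] [Module ℝ V] (M I : Set V) : Prop :=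
  I ⊆ M ∧ ∀ w ∈ M, ∃ (p : ℕ) (h : Fin p → V) (lam : Fin p → ℕ),
    (∀ i, h i ∈ I) ∧ w = ∑ i, (lam i : ℝ) • h i

theorem IsGenSet.subset_closure {V : Type*} [AddCommMonoid V] [Module ℝ V] {M I : Set V}
    (hI : IsGenSet M I) : M ⊆ AddSubmonoid.closure I := by
  intro w hw
  obtain ⟨p, h, lam, hhI, rfl⟩ := hI.2 w hw
  refine AddSubmonoid.sum_mem _ fun i _ => ?_
  rw [Nat.cast_smul_eq_nsmul]
  exact AddSubmonoid.nsmul_mem _ (AddSubmonoid.subset_closure (hhI i)) _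

theorem AddSubmonoid.le_addMonoidHom_of_mem_closure {V β : Type*} [AddCommMonoid V]
    [AddCommMonoid β] [PartialOrder β] [IsOrderedAddMonoid β]
    {S : AddSubmonoid V} {g : V → β} (hg0 : g 0 ≤ 0)
    (hg : ∀ x ∈ S, ∀ y ∈ S, g (x + y) ≤ g x + g y) (ℓ : V →+ β)
    {I : Set V} (hIS : I ⊆ S) (hI : ∀ x ∈ I, g x ≤ ℓ x) :
    ∀ x ∈ closure I, g x ≤ ℓ x := by
  have hcl : closure I ≤ S := closure_le.2 hIS
  intro x hx
  induction hx using closure_induction with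
  | mem x hx => exact hI x hx
  | zero => simpa using hg0
  | add x y hx hy hgx hgy =>
    calc g (x + y) ≤ g x + g y := hg x (hcl hx) y (hcl hy)
      _ ≤ ℓ x + ℓ y := add_le_add hgx hgy
      _ = ℓ (x + y) := (map_add ℓ x y).symm

theorem constraint_on_monoid_of_isGenSet {n₁ n₂ m : ℕ}
    {M I : Set ((Fin n₁ → ℝ) × (Fin n₂ → ℝ))}
    (hMzero : (0 : (Fin n₁ → ℝ) × (Fin n₂ → ℝ)) ∈ M)
    (hMadd : ∀ p ∈ M, ∀ q ∈ M, p + q ∈ M) (hI : IsGenSet M I)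
    (A : Matrix (Fin m) (Fin n₁) ℝ) (G : Matrix (Fin m) (Fin n₂) ℝ)
    (c : Fin n₁ → ℝ) (d : Fin n₂ → ℝ) {D : Set (Fin m → ℝ)}
    (hD : {ω | ∃ p ∈ M, A.mulVec p.1 + G.mulVec p.2 = ω} ⊆ D) {f : (Fin m → ℝ) → ℝ}
    (hsub : ∀ u ∈ D, ∀ v ∈ D, u + v ∈ D → f (u + v) ≤ f u + f v) (hf0 : f 0 = 0)
    (hb : ∀ p ∈ I, f (A.mulVec p.1 + G.mulVec p.2) ≤ c ⬝ᵥ p.1 + d ⬝ᵥ p.2) :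
    ∀ p ∈ M, f (A.mulVec p.1 + G.mulVec p.2) ≤ c ⬝ᵥ p.1 + d ⬝ᵥ p.2 := by
  let S : AddSubmonoid ((Fin n₁ → ℝ) × (Fin n₂ → ℝ)) :=
    { carrier := M, add_mem' := fun hp hq => hMadd _ hp _ hq, zero_mem' := hMzero }
  let φ := A.mulVecLin.coprod G.mulVecLin
  let ℓ : (Fin n₁ → ℝ) × (Fin n₂ → ℝ) →+ ℝ :=
    AddMonoidHom.mk' (fun p => c ⬝ᵥ p.1 + d ⬝ᵥ p.2) fun p q => by
      simp only [Prod.fst_add, Prod.snd_add, dotProduct_add]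
      ring
  have hφD : ∀ p ∈ M, φ p ∈ D := fun p hp => hD ⟨p, hp, rfl⟩
  have hsubφ : ∀ p ∈ S, ∀ q ∈ S, f (φ (p + q)) ≤ f (φ p) + f (φ q) := fun p hp q hq => by
    have hpq := hφD _ (hMadd p hp q hq)
    rw [map_add] at hpq ⊢
    exact hsub _ (hφD p hp) _ (hφD q hq) hpq
  intro p hp
  exact AddSubmonoid.le_addMonoidHom_of_mem_closure (g := f ∘ φ) (by simp [hf0]) hsubφ ℓ
    hI.1 hb p (hI.subset_closure hp)

theorem genSet_constraints_indep_general {n₁ n₂ m : ℕ}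
    (M : Set ((Fin n₁ → ℝ) × (Fin n₂ → ℝ)))
    (hMzero : (0 : (Fin n₁ → ℝ) × (Fin n₂ → ℝ)) ∈ M)
    (hMadd : ∀ p ∈ M, ∀ q ∈ M, p + q ∈ M)
    (A : Matrix (Fin m) (Fin n₁) ℝ) (G : Matrix (Fin m) (Fin n₂) ℝ)
    (c : Fin n₁ → ℝ) (d : Fin n₂ → ℝ)
    (I I' : Set ((Fin n₁ → ℝ) × (Fin n₂ → ℝ)))
    (hI : IsGenSet M I) (hI' : IsGenSet M I')
    (D : Set (Fin m → ℝ))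
    (hD : {ω | ∃ p ∈ M, A.mulVec p.1 + G.mulVec p.2 = ω} ⊆ D)
    (f : (Fin m → ℝ) → ℝ)
    (hsub : ∀ u ∈ D, ∀ v ∈ D, u + v ∈ D → f (u + v) ≤ f u + f v)
    (hf0 : f 0 = 0) :
    (∀ p ∈ I, f (A.mulVec p.1 + G.mulVec p.2) ≤ c ⬝ᵥ p.1 + d ⬝ᵥ p.2) ↔
      (∀ p ∈ I', f (A.mulVec p.1 + G.mulVec p.2) ≤ c ⬝ᵥ p.1 + d ⬝ᵥ p.2) :=
  ⟨fun hb p hp => constraint_on_monoid_of_isGenSet hMzero hMadd hI A G c d hD hsub hf0 hb p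
      (hI'.1 hp),
    fun hb p hp => constraint_on_monoid_of_isGenSet hMzero hMadd hI' A G c d hD hsub hf0 hb p
      (hI.1 hp)⟩

/-- The dual constraints do not depend on the choice of generating set of `M`. -/
theorem genSet_constraints_indep {n₁ n₂ m : ℕ}
    (M : Set ((Fin n₁ → ℝ) × (Fin n₂ → ℝ)))
    (hMzero : (0 : (Fin n₁ → ℝ) × (Fin n₂ → ℝ)) ∈ M)
    (hMadd : ∀ p ∈ M, ∀ q ∈ M, p + q ∈ M)
    (hMint : ∀ p ∈ M, ∀ i, ∃ k : ℤ, p.1 i = (k : ℝ))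
    (A : Matrix (Fin m) (Fin n₁) ℝ) (G : Matrix (Fin m) (Fin n₂) ℝ)
    (c : Fin n₁ → ℝ) (d : Fin n₂ → ℝ)
    (I I' : Set ((Fin n₁ → ℝ) × (Fin n₂ → ℝ)))
    (hI : IsGenSet M I) (hI' : IsGenSet M I')
    (D : Set (Fin m → ℝ))
    (hD : {ω | ∃ p ∈ M, A.mulVec p.1 + G.mulVec p.2 = ω} ⊆ D)
    (f : (Fin m → ℝ) → ℝ)
    (hsub : ∀ u ∈ D, ∀ v ∈ D, u + v ∈ D → f (u + v) ≤ f u + f v)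
    (hf0 : f 0 = 0) :
    (∀ p ∈ I, f (A.mulVec p.1 + G.mulVec p.2) ≤ c ⬝ᵥ p.1 + d ⬝ᵥ p.2) ↔
      (∀ p ∈ I', f (A.mulVec p.1 + G.mulVec p.2) ≤ c ⬝ᵥ p.1 + d ⬝ᵥ p.2) :=
  genSet_constraints_indep_general M hMzero hMadd A G c d I I' hI hI' D hD f hsub hf0
end

section
/- (Weak duality.) Let M ⊆ ℤ^{n₁} × ℝ^{n₂} be a monoid, A ∈ ℝ^{m×n₁}, G ∈ ℝ^{m×n₂}, b ∈ ℝ^m, c ∈ ℝ^{n₁}, d ∈ ℝ^{n₂}, and let I(M) be a generating set of M. Let D ⊆ ℝ^m contain Ω = {Au + Gv : (u,v) ∈ M}, and let f : D → ℝ be subadditive with f(0) = 0 and f(Au + Gv) ≤ c^Tu + d^Tv for all (u,v) ∈ I(M). Then for every (x,y) ∈ M with Ax + Gy = b, one has f(b) ≤ c^Tx + d^Ty. -/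
open Matrix

/-!
Write `φ (u, v) = A u + G v` and `ψ (u, v) = cᵀu + dᵀv`; both are additive. If `f (φ u) ≤ ψ u`
and `f (φ v) ≤ ψ v` for `u, v ∈ M`, subadditivity of `f` on `D ⊇ φ(M)` gives
`f (φ (u + v)) ≤ ψ (u + v)`. So the inequality, assumed on the generators, holds on the whole
monoid they generate, in particular at a primal feasible point.
-/

def SubadditiveOn {W β : Type*} [Add W] [Add β] [LE β] (D : Set W) (f : W → β) : Prop :=
  ∀ u ∈ D, ∀ v ∈ D, u + v ∈ D → f (u + v) ≤ f u + f v

theorem SubadditiveOn.le_of_mem_closure {V W β : Type*} [AddCommMonoid V] [AddCommMonoid W]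
    [AddCommMonoid β] [PartialOrder β] [IsOrderedAddMonoid β]
    {D : Set W} {f : W → β} {φ : V →+ W} {ψ : V →+ β} {I : Set V}
    (hf : SubadditiveOn D f) (hf0 : f 0 = 0)
    (hD : ∀ w ∈ AddSubmonoid.closure I, φ w ∈ D) (hI : ∀ v ∈ I, f (φ v) ≤ ψ v) :
    ∀ w ∈ AddSubmonoid.closure I, f (φ w) ≤ ψ w := by
  intro w hw
  induction hw using AddSubmonoid.closure_induction with
  | mem v hv => exact hI v hv
  | zero => simp [hf0]
  | add u v hu hv ihu ihv =>
    calc f (φ (u + v)) = f (φ u + φ v) := by rw [map_add]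
      _ ≤ f (φ u) + f (φ v) :=
        hf _ (hD u hu) _ (hD v hv) (map_add φ u v ▸ hD _ (add_mem hu hv))
      _ ≤ ψ u + ψ v := add_le_add ihu ihv
      _ = ψ (u + v) := (map_add ψ u v).symm

theorem weak_duality_general {n₁ n₂ m : ℕ}
    (M : Set ((Fin n₁ → ℝ) × (Fin n₂ → ℝ)))
    (hMzero : (0 : (Fin n₁ → ℝ) × (Fin n₂ → ℝ)) ∈ M)
    (hMadd : ∀ p ∈ M, ∀ q ∈ M, p + q ∈ M)
    (A : Matrix (Fin m) (Fin n₁) ℝ) (G : Matrix (Fin m) (Fin n₂) ℝ)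
    (b : Fin m → ℝ) (c : Fin n₁ → ℝ) (d : Fin n₂ → ℝ)
    (I : Set ((Fin n₁ → ℝ) × (Fin n₂ → ℝ))) (hI : IsGenSet M I)
    (D : Set (Fin m → ℝ))
    (hD : {ω | ∃ p ∈ M, A.mulVec p.1 + G.mulVec p.2 = ω} ⊆ D)
    (f : (Fin m → ℝ) → ℝ)
    (hsub : ∀ u ∈ D, ∀ v ∈ D, u + v ∈ D → f (u + v) ≤ f u + f v)
    (hf0 : f 0 = 0)
    (hfeasdual : ∀ p ∈ I, f (A.mulVec p.1 + G.mulVec p.2) ≤ c ⬝ᵥ p.1 + d ⬝ᵥ p.2) :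
    ∀ p ∈ M, A.mulVec p.1 + G.mulVec p.2 = b → f b ≤ c ⬝ᵥ p.1 + d ⬝ᵥ p.2 := by
  let monoid : AddSubmonoid ((Fin n₁ → ℝ) × (Fin n₂ → ℝ)) :=
    { carrier := M, zero_mem' := hMzero, add_mem' := fun hp hq => hMadd _ hp _ hq }
  let φ : (Fin n₁ → ℝ) × (Fin n₂ → ℝ) →+ (Fin m → ℝ) :=
    (A.mulVecLin.coprod G.mulVecLin).toAddMonoidHom
  let ψ : (Fin n₁ → ℝ) × (Fin n₂ → ℝ) →+ ℝ :=
    ((dotProductBilin ℝ ℝ c).coprod (dotProductBilin ℝ ℝ d)).toAddMonoidHom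
  have hclosure : ∀ w ∈ AddSubmonoid.closure I, w ∈ M :=
    fun _ hw => AddSubmonoid.closure_le (S := monoid) |>.mpr hI.1 hw
  intro p hp rfl
  exact SubadditiveOn.le_of_mem_closure (φ := φ) (ψ := ψ) hsub hf0
    (fun w hw => hD ⟨w, hclosure w hw, rfl⟩) hfeasdual p (hI.subset_closure hp)

/-- Weak duality: a feasible subadditive dual function `f` lower bounds the objective
value of every primal feasible solution. -/
theorem weak_duality {n₁ n₂ m : ℕ}
    (M : Set ((Fin n₁ → ℝ) × (Fin n₂ → ℝ)))
    (hMzero : (0 : (Fin n₁ → ℝ) × (Fin n₂ → ℝ)) ∈ M)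
    (hMadd : ∀ p ∈ M, ∀ q ∈ M, p + q ∈ M)
    (hMint : ∀ p ∈ M, ∀ i, ∃ k : ℤ, p.1 i = (k : ℝ))
    (A : Matrix (Fin m) (Fin n₁) ℝ) (G : Matrix (Fin m) (Fin n₂) ℝ)
    (b : Fin m → ℝ) (c : Fin n₁ → ℝ) (d : Fin n₂ → ℝ)
    (I : Set ((Fin n₁ → ℝ) × (Fin n₂ → ℝ))) (hI : IsGenSet M I)
    (D : Set (Fin m → ℝ))
    (hD : {ω | ∃ p ∈ M, A.mulVec p.1 + G.mulVec p.2 = ω} ⊆ D)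
    (f : (Fin m → ℝ) → ℝ)
    (hsub : ∀ u ∈ D, ∀ v ∈ D, u + v ∈ D → f (u + v) ≤ f u + f v)
    (hf0 : f 0 = 0)
    (hfeasdual : ∀ p ∈ I, f (A.mulVec p.1 + G.mulVec p.2) ≤ c ⬝ᵥ p.1 + d ⬝ᵥ p.2) :
    ∀ p ∈ M, A.mulVec p.1 + G.mulVec p.2 = b → f b ≤ c ⬝ᵥ p.1 + d ⬝ᵥ p.2 :=
  weak_duality_general M hMzero hMadd A G b c d I hI D hD f hsub hf0 hfeasdual
end

section
/- Let M ⊆ ℤ^{n₁} × ℝ^{n₂} be a monoid, A ∈ ℝ^{m×n₁}, G ∈ ℝ^{m×n₂}, b ∈ ℝ^m, c ∈ ℝ^{n₁}, d ∈ ℝ^{n₂}, and let α ∈ ℝ^m be such that the supremum sup{(A^Tα − c)^Tx + (G^Tα − d)^Ty : (x,y) ∈ M^≤(b)} is finite. Then for every (x,y) ∈ M with Ax + Gy = b, the generator subadditive function satisfies F_α(b) ≤ c^Tx + d^Ty; in particular F_α(b) ≤ z*, the optimal value of the primal MIP. -/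
open Matrix

/-- Weak duality for generator subadditive functions: if the supremum defining
`F_α(b)` is finite, then `F_α(b) ≤ cᵀx + dᵀy` for every primal feasible `(x,y)`,
and in particular `F_α(b) ≤ z*`. -/
theorem generator_weak_duality {n₁ n₂ m : ℕ}
    (M : Set ((Fin n₁ → ℝ) × (Fin n₂ → ℝ)))
    (hMzero : (0 : (Fin n₁ → ℝ) × (Fin n₂ → ℝ)) ∈ M)
    (hMadd : ∀ p ∈ M, ∀ q ∈ M, p + q ∈ M)
    (hMint : ∀ p ∈ M, ∀ i, ∃ k : ℤ, p.1 i = (k : ℝ))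
    (A : Matrix (Fin m) (Fin n₁) ℝ) (G : Matrix (Fin m) (Fin n₂) ℝ)
    (b : Fin m → ℝ) (c : Fin n₁ → ℝ) (d : Fin n₂ → ℝ) (α : Fin m → ℝ)
    -- the supremum defining `F_α(b)` is finite
    (hbdd : BddAbove {z : ℝ | ∃ p ∈ M,
      (∀ i, A.mulVec p.1 i + G.mulVec p.2 i ≤ b i) ∧
      z = (Aᵀ.mulVec α - c) ⬝ᵥ p.1 + (Gᵀ.mulVec α - d) ⬝ᵥ p.2}) :
    (∀ p ∈ M, A.mulVec p.1 + G.mulVec p.2 = b →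
        α ⬝ᵥ b - sSup {z : ℝ | ∃ p ∈ M,
            (∀ i, A.mulVec p.1 i + G.mulVec p.2 i ≤ b i) ∧
            z = (Aᵀ.mulVec α - c) ⬝ᵥ p.1 + (Gᵀ.mulVec α - d) ⬝ᵥ p.2} ≤
          c ⬝ᵥ p.1 + d ⬝ᵥ p.2) ∧
      ((α ⬝ᵥ b - sSup {z : ℝ | ∃ p ∈ M,
            (∀ i, A.mulVec p.1 i + G.mulVec p.2 i ≤ b i) ∧
            z = (Aᵀ.mulVec α - c) ⬝ᵥ p.1 + (Gᵀ.mulVec α - d) ⬝ᵥ p.2} : ℝ) : EReal) ≤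
        sInf ((fun p : (Fin n₁ → ℝ) × (Fin n₂ → ℝ) =>
            ((c ⬝ᵥ p.1 + d ⬝ᵥ p.2 : ℝ) : EReal)) ''
          {p ∈ M | A.mulVec p.1 + G.mulVec p.2 = b}) := by
  have key : ∀ p ∈ M, A.mulVec p.1 + G.mulVec p.2 = b →
      α ⬝ᵥ b - sSup {z : ℝ | ∃ p ∈ M,
          (∀ i, A.mulVec p.1 i + G.mulVec p.2 i ≤ b i) ∧
          z = (Aᵀ.mulVec α - c) ⬝ᵥ p.1 + (Gᵀ.mulVec α - d) ⬝ᵥ p.2} ≤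
        c ⬝ᵥ p.1 + d ⬝ᵥ p.2 := by
    intro p hp heq
    have hz : ((Aᵀ.mulVec α - c) ⬝ᵥ p.1 + (Gᵀ.mulVec α - d) ⬝ᵥ p.2) ∈
        {z : ℝ | ∃ p ∈ M,
          (∀ i, A.mulVec p.1 i + G.mulVec p.2 i ≤ b i) ∧
          z = (Aᵀ.mulVec α - c) ⬝ᵥ p.1 + (Gᵀ.mulVec α - d) ⬝ᵥ p.2} :=
      ⟨p, hp, fun i => le_of_eq (congrFun heq i), rfl⟩
    have hle := le_csSup hbdd hz
    have hab : α ⬝ᵥ b = Aᵀ.mulVec α ⬝ᵥ p.1 + Gᵀ.mulVec α ⬝ᵥ p.2 := by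
      rw [← heq, dotProduct_add, Matrix.dotProduct_mulVec,
        Matrix.dotProduct_mulVec, Matrix.mulVec_transpose, Matrix.mulVec_transpose]
    rw [sub_dotProduct, sub_dotProduct] at hle
    linarith
  refine ⟨key, le_sInf ?_⟩
  rintro x ⟨p, ⟨hp, heq⟩, rfl⟩
  exact EReal.coe_le_coe_iff.mpr (key p hp heq)
end

section
/- Let M ⊆ ℤ^{n₁} × ℝ^{n₂} be a monoid, A ∈ ℝ^{m×n₁}, G ∈ ℝ^{m×n₂}, c ∈ ℝ^{n₁}, d ∈ ℝ^{n₂}, and let α ∈ ℝ^m be such that for every ω ∈ Ω^≤ the supremum sup{(A^Tα − c)^Tx + (G^Tα − d)^Ty : (x,y) ∈ M^≤(ω)} is finite (so F_α : Ω^≤ → ℝ is well-defined). Then: (i) F_α is subadditive on Ω^≤, i.e., for ω₁, ω₂ ∈ Ω^≤ one has ω₁ + ω₂ ∈ Ω^≤ and F_α(ω₁ + ω₂) ≤ F_α(ω₁) + F_α(ω₂); (ii) F_α(Au + Gv) ≤ c^Tu + d^Tv for every (u,v) ∈ M; (iii) F_α(0) = 0. -/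
open Matrix

/-- The generator subadditive function `F_α` is a feasible dual solution:
it is subadditive on `Ω^≤`, satisfies the dual constraints on `M`, and `F_α(0) = 0`. -/
theorem generator_dual_feasible {n₁ n₂ m : ℕ}
    (M : Set ((Fin n₁ → ℝ) × (Fin n₂ → ℝ)))
    (hMzero : (0 : (Fin n₁ → ℝ) × (Fin n₂ → ℝ)) ∈ M)
    (hMadd : ∀ p ∈ M, ∀ q ∈ M, p + q ∈ M)
    (hMint : ∀ p ∈ M, ∀ i, ∃ k : ℤ, p.1 i = (k : ℝ))
    (A : Matrix (Fin m) (Fin n₁) ℝ) (G : Matrix (Fin m) (Fin n₂) ℝ)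
    (c : Fin n₁ → ℝ) (d : Fin n₂ → ℝ) (α : Fin m → ℝ)
    (Ωle : Set (Fin m → ℝ))
    (hΩle : Ωle = {ω | ∃ p ∈ M, ∀ i, A.mulVec p.1 i + G.mulVec p.2 i ≤ ω i})
    (F : (Fin m → ℝ) → ℝ)
    (hF : ∀ ω, F ω = α ⬝ᵥ ω - sSup {z : ℝ | ∃ p ∈ M,
      (∀ i, A.mulVec p.1 i + G.mulVec p.2 i ≤ ω i) ∧
      z = (Aᵀ.mulVec α - c) ⬝ᵥ p.1 + (Gᵀ.mulVec α - d) ⬝ᵥ p.2})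
    -- `F_α` is well-defined on `Ω^≤`: each defining supremum is finite
    (hbdd : ∀ ω ∈ Ωle, BddAbove {z : ℝ | ∃ p ∈ M,
      (∀ i, A.mulVec p.1 i + G.mulVec p.2 i ≤ ω i) ∧
      z = (Aᵀ.mulVec α - c) ⬝ᵥ p.1 + (Gᵀ.mulVec α - d) ⬝ᵥ p.2}) :
    (∀ ω₁ ∈ Ωle, ∀ ω₂ ∈ Ωle, ω₁ + ω₂ ∈ Ωle ∧ F (ω₁ + ω₂) ≤ F ω₁ + F ω₂) ∧
      (∀ p ∈ M, F (A.mulVec p.1 + G.mulVec p.2) ≤ c ⬝ᵥ p.1 + d ⬝ᵥ p.2) ∧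
      F 0 = 0 := by
  set g : ((Fin n₁ → ℝ) × (Fin n₂ → ℝ)) → ℝ :=
    fun p => (Aᵀ.mulVec α - c) ⬝ᵥ p.1 + (Gᵀ.mulVec α - d) ⬝ᵥ p.2 with hg
  set S : (Fin m → ℝ) → Set ℝ :=
    fun ω => {z : ℝ | ∃ p ∈ M,
      (∀ i, A.mulVec p.1 i + G.mulVec p.2 i ≤ ω i) ∧ z = g p} with hSdef
  have hFS : ∀ ω, F ω = α ⬝ᵥ ω - sSup (S ω) := hF
  have hbddS : ∀ ω ∈ Ωle, BddAbove (S ω) := hbdd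
  have gadd : ∀ p q : (Fin n₁ → ℝ) × (Fin n₂ → ℝ), g (p + q) = g p + g q := by
    intro p q
    simp only [hg, Prod.fst_add, Prod.snd_add, dotProduct_add]
    ring
  have gzero : g 0 = 0 := by simp [hg]
  have hzeroΩ : (0 : Fin m → ℝ) ∈ Ωle := by
    rw [hΩle]
    exact ⟨0, hMzero, fun i => by simp⟩
  have memS : ∀ p ∈ M, ∀ ω : Fin m → ℝ,
      (∀ i, A.mulVec p.1 i + G.mulVec p.2 i ≤ ω i) → g p ∈ S ω := by
    intro p hp ω hfeas
    exact ⟨p, hp, hfeas, rfl⟩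
  -- F 0 = 0
  have hS0 : sSup (S 0) = 0 := by
    have h0mem : (0 : ℝ) ∈ S 0 := by
      have := memS 0 hMzero 0 (fun i => by simp)
      rwa [gzero] at this
    have hub : ∀ z ∈ S 0, z ≤ 0 := by
      rintro z ⟨p, hp, hfeas, rfl⟩
      by_contra h
      push_neg at h
      obtain ⟨B, hB⟩ := hbddS 0 hzeroΩ
      have grow : ∀ n : ℕ, ∃ q ∈ M,
          (∀ i, A.mulVec q.1 i + G.mulVec q.2 i ≤ (0 : Fin m → ℝ) i) ∧
          g q = n * g p := by
        intro n
        induction n with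
        | zero => exact ⟨0, hMzero, fun i => by simp, by simp [gzero]⟩
        | succ n ih =>
          obtain ⟨q, hq, hqfeas, hqg⟩ := ih
          refine ⟨q + p, hMadd q hq p hp, fun i => ?_, ?_⟩
          · have := add_le_add (hqfeas i) (hfeas i)
            simp only [Prod.fst_add, Prod.snd_add, mulVec_add, Pi.add_apply, Pi.zero_apply] at *
            linarith
          · rw [gadd, hqg]
            push_cast
            ring
      obtain ⟨n, hn⟩ := exists_nat_gt (B / g p)
      obtain ⟨q, hq, hqfeas, hqg⟩ := grow n
      have h1 : g q ∈ S 0 := memS q hq 0 hqfeas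
      have h2 : g q ≤ B := hB h1
      have h3 : B < n * g p := (div_lt_iff₀ h).mp hn
      rw [hqg] at h2
      linarith
    exact le_antisymm (csSup_le ⟨0, h0mem⟩ hub) (le_csSup ⟨0, hub⟩ h0mem)
  have hF0 : F 0 = 0 := by rw [hFS, hS0]; simp
  refine ⟨?_, ?_, hF0⟩
  · -- subadditivity
    intro ω₁ hω₁ ω₂ hω₂
    rw [hΩle] at hω₁ hω₂
    obtain ⟨p₁, hp₁, hf₁⟩ := hω₁
    obtain ⟨p₂, hp₂, hf₂⟩ := hω₂
    have hsummem : ω₁ + ω₂ ∈ Ωle := by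
      rw [hΩle]
      refine ⟨p₁ + p₂, hMadd p₁ hp₁ p₂ hp₂, fun i => ?_⟩
      have := add_le_add (hf₁ i) (hf₂ i)
      simp only [Prod.fst_add, Prod.snd_add, mulVec_add, Pi.add_apply] at *
      linarith
    refine ⟨hsummem, ?_⟩
    have hω₁' : ω₁ ∈ Ωle := by rw [hΩle]; exact ⟨p₁, hp₁, hf₁⟩
    have hω₂' : ω₂ ∈ Ωle := by rw [hΩle]; exact ⟨p₂, hp₂, hf₂⟩
    have key : sSup (S ω₁) + sSup (S ω₂) ≤ sSup (S (ω₁ + ω₂)) := by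
      have hb12 := hbddS _ hsummem
      have h1 : sSup (S ω₁) ≤ sSup (S (ω₁ + ω₂)) - sSup (S ω₂) := by
        apply csSup_le ⟨g p₁, memS p₁ hp₁ ω₁ hf₁⟩
        rintro z₁ ⟨q₁, hq₁, hq₁f, rfl⟩
        rw [le_sub_iff_add_le, add_comm, ← le_sub_iff_add_le]
        apply csSup_le ⟨g p₂, memS p₂ hp₂ ω₂ hf₂⟩
        rintro z₂ ⟨q₂, hq₂, hq₂f, rfl⟩
        rw [le_sub_iff_add_le, add_comm, ← gadd]
        apply le_csSup hb12
        refine memS _ (hMadd q₁ hq₁ q₂ hq₂) _ fun i => ?_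
        have := add_le_add (hq₁f i) (hq₂f i)
        simp only [Prod.fst_add, Prod.snd_add, mulVec_add, Pi.add_apply] at *
        linarith
      linarith
    rw [hFS, hFS, hFS, dotProduct_add]
    linarith
  · -- dual constraints
    intro p hp
    have hωmem : A.mulVec p.1 + G.mulVec p.2 ∈ Ωle := by
      rw [hΩle]; exact ⟨p, hp, fun i => le_of_eq rfl⟩
    have h1 : g p ≤ sSup (S (A.mulVec p.1 + G.mulVec p.2)) :=
      le_csSup (hbddS _ hωmem) (memS p hp _ fun i => le_of_eq rfl)
    rw [hFS]
    have hgid : g p = α ⬝ᵥ (A.mulVec p.1 + G.mulVec p.2) - (c ⬝ᵥ p.1 + d ⬝ᵥ p.2) := by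
      simp only [hg, dotProduct_add, sub_dotProduct, dotProduct_mulVec, mulVec_transpose]
      ring
    linarith
end

section
/- (Strong duality via generator subadditive functions.) Let M ⊆ ℤ^{n₁} × ℝ^{n₂} be a monoid, A ∈ ℝ^{m×n₁}, G ∈ ℝ^{m×n₂}, b ∈ ℝ^m, c ∈ ℝ^{n₁}, d ∈ ℝ^{n₂}, and suppose the primal MIP is feasible with optimal value z* ∈ ℝ. Suppose conv(M^≤(b)) = {(x,y) ∈ ℝ^{n₁} × ℝ^{n₂} : ∃ w ∈ ℝ^{n₃} with Πx + Φy + Ψw − π ∈ C} for matrices Π, Φ, Ψ, a vector π, and a regular cone C. Suppose further that there exist α* ∈ ℝ^m and γ* ∈ C_* with A^Tα* + Π^Tγ* = c, G^Tα* + Φ^Tγ* = d, Ψ^Tγ* = 0, and b^Tα* + π^Tγ* = z*. Then sup{(A^Tα* − c)^Tx + (G^Tα* − d)^Ty : (x,y) ∈ M^≤(b)} ≤ b^Tα* − z*, and consequently F_{α*}(b) = z*. -/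
open Matrix

/-- A regular cone: closed, convex, a cone, pointed, and full-dimensional. -/
def IsRegularCone {k : ℕ} (C : Set (Fin k → ℝ)) : Prop :=
  IsClosed C ∧ Convex ℝ C ∧ (∀ x ∈ C, ∀ t : ℝ, 0 ≤ t → t • x ∈ C) ∧
    C ∩ (-C) = {0} ∧ (interior C).Nonempty

/-- The dual cone of `C`. -/
def dualConeOf {k : ℕ} (C : Set (Fin k → ℝ)) : Set (Fin k → ℝ) :=
  {y | ∀ x ∈ C, 0 ≤ x ⬝ᵥ y}

lemma transpose_mulVec_dot {m n : ℕ} (B : Matrix (Fin m) (Fin n) ℝ)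
    (v : Fin m → ℝ) (w : Fin n → ℝ) :
    Bᵀ.mulVec v ⬝ᵥ w = v ⬝ᵥ B.mulVec w := by
  rw [Matrix.mulVec_transpose, Matrix.dotProduct_mulVec]

/-- Strong duality via generator subadditive functions. -/
theorem strong_duality_generator {n₁ n₂ n₃ q m : ℕ}
    (M : Set ((Fin n₁ → ℝ) × (Fin n₂ → ℝ)))
    (hMzero : (0 : (Fin n₁ → ℝ) × (Fin n₂ → ℝ)) ∈ M)
    (hMadd : ∀ p ∈ M, ∀ q' ∈ M, p + q' ∈ M)
    (hMint : ∀ p ∈ M, ∀ i, ∃ k : ℤ, p.1 i = (k : ℝ))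
    (A : Matrix (Fin m) (Fin n₁) ℝ) (G : Matrix (Fin m) (Fin n₂) ℝ)
    (b : Fin m → ℝ) (c : Fin n₁ → ℝ) (d : Fin n₂ → ℝ)
    -- the primal MIP is feasible with (finite) optimal value `zstar`
    (zstar : ℝ)
    (hfeas : ∃ p ∈ M, A.mulVec p.1 + G.mulVec p.2 = b)
    (hz : sInf ((fun p : (Fin n₁ → ℝ) × (Fin n₂ → ℝ) =>
        ((c ⬝ᵥ p.1 + d ⬝ᵥ p.2 : ℝ) : EReal)) ''
        {p ∈ M | A.mulVec p.1 + G.mulVec p.2 = b}) = (zstar : EReal))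
    -- `conv(M^≤(b))` is conic representable
    (Pi : Matrix (Fin q) (Fin n₁) ℝ) (Phi : Matrix (Fin q) (Fin n₂) ℝ)
    (Psi : Matrix (Fin q) (Fin n₃) ℝ) (piv : Fin q → ℝ)
    (C : Set (Fin q → ℝ)) (hC : IsRegularCone C)
    (hrepr : convexHull ℝ {p ∈ M | ∀ i, A.mulVec p.1 i + G.mulVec p.2 i ≤ b i} =
      {p : (Fin n₁ → ℝ) × (Fin n₂ → ℝ) | ∃ w : Fin n₃ → ℝ,
        Pi.mulVec p.1 + Phi.mulVec p.2 + Psi.mulVec w - piv ∈ C})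
    -- optimal dual multipliers for the conic reformulation
    (αstar : Fin m → ℝ) (γstar : Fin q → ℝ) (hγ : γstar ∈ dualConeOf C)
    (h1 : Aᵀ.mulVec αstar + Piᵀ.mulVec γstar = c)
    (h2 : Gᵀ.mulVec αstar + Phiᵀ.mulVec γstar = d)
    (h3 : Psiᵀ.mulVec γstar = 0)
    (h4 : b ⬝ᵥ αstar + piv ⬝ᵥ γstar = zstar) :
    (∀ p ∈ M, (∀ i, A.mulVec p.1 i + G.mulVec p.2 i ≤ b i) →
        (Aᵀ.mulVec αstar - c) ⬝ᵥ p.1 + (Gᵀ.mulVec αstar - d) ⬝ᵥ p.2 ≤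
          b ⬝ᵥ αstar - zstar) ∧
      αstar ⬝ᵥ b - sSup {z : ℝ | ∃ p ∈ M,
          (∀ i, A.mulVec p.1 i + G.mulVec p.2 i ≤ b i) ∧
          z = (Aᵀ.mulVec αstar - c) ⬝ᵥ p.1 + (Gᵀ.mulVec αstar - d) ⬝ᵥ p.2} = zstar := by
  have key : ∀ p ∈ M, (∀ i, A.mulVec p.1 i + G.mulVec p.2 i ≤ b i) →
      (Aᵀ.mulVec αstar - c) ⬝ᵥ p.1 + (Gᵀ.mulVec αstar - d) ⬝ᵥ p.2 ≤
        b ⬝ᵥ αstar - zstar := by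
    intro p hpM hple
    have hmem : p ∈ convexHull ℝ
        {p ∈ M | ∀ i, A.mulVec p.1 i + G.mulVec p.2 i ≤ b i} :=
      subset_convexHull ℝ _ ⟨hpM, hple⟩
    rw [hrepr] at hmem
    obtain ⟨w, hw⟩ := hmem
    have h0 : 0 ≤ (Pi.mulVec p.1 + Phi.mulVec p.2 + Psi.mulVec w - piv) ⬝ᵥ γstar :=
      hγ _ hw
    have e3 : Psi.mulVec w ⬝ᵥ γstar = 0 := by
      rw [dotProduct_comm, ← transpose_mulVec_dot, h3, zero_dotProduct]
    have e4 : Pi.mulVec p.1 ⬝ᵥ γstar = Piᵀ.mulVec γstar ⬝ᵥ p.1 := by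
      rw [transpose_mulVec_dot, dotProduct_comm]
    have e5 : Phi.mulVec p.2 ⬝ᵥ γstar = Phiᵀ.mulVec γstar ⬝ᵥ p.2 := by
      rw [transpose_mulVec_dot, dotProduct_comm]
    rw [sub_dotProduct, add_dotProduct, add_dotProduct,
      e3, e4, e5] at h0
    have e1 : (Aᵀ.mulVec αstar - c) ⬝ᵥ p.1 = -(Piᵀ.mulVec γstar ⬝ᵥ p.1) := by
      have hA : Aᵀ.mulVec αstar - c = -(Piᵀ.mulVec γstar) := by rw [← h1]; abel
      rw [hA, neg_dotProduct]
    have e2 : (Gᵀ.mulVec αstar - d) ⬝ᵥ p.2 = -(Phiᵀ.mulVec γstar ⬝ᵥ p.2) := by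
      have hG : Gᵀ.mulVec αstar - d = -(Phiᵀ.mulVec γstar) := by rw [← h2]; abel
      rw [hG, neg_dotProduct]
    rw [e1, e2]
    linarith
  refine ⟨key, ?_⟩
  set S : Set ℝ := {z : ℝ | ∃ p ∈ M,
      (∀ i, A.mulVec p.1 i + G.mulVec p.2 i ≤ b i) ∧
      z = (Aᵀ.mulVec αstar - c) ⬝ᵥ p.1 + (Gᵀ.mulVec αstar - d) ⬝ᵥ p.2} with hSdef
  obtain ⟨p0, hp0M, hp0eq⟩ := hfeas
  have hp0le : ∀ i, A.mulVec p0.1 i + G.mulVec p0.2 i ≤ b i :=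
    fun i => (congrFun hp0eq i).le
  have hne : S.Nonempty := ⟨_, p0, hp0M, hp0le, rfl⟩
  have hbdd : BddAbove S := by
    refine ⟨b ⬝ᵥ αstar - zstar, ?_⟩
    rintro z ⟨p, hpM, hple, rfl⟩
    exact key p hpM hple
  have hle : sSup S ≤ b ⬝ᵥ αstar - zstar := by
    apply csSup_le hne
    rintro z ⟨p, hpM, hple, rfl⟩
    exact key p hpM hple
  have hge : b ⬝ᵥ αstar - zstar ≤ sSup S := by
    apply le_of_forall_pos_le_add
    intro ε hε
    have hlt : sInf ((fun p : (Fin n₁ → ℝ) × (Fin n₂ → ℝ) =>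
        ((c ⬝ᵥ p.1 + d ⬝ᵥ p.2 : ℝ) : EReal)) ''
        {p ∈ M | A.mulVec p.1 + G.mulVec p.2 = b}) < ((zstar + ε : ℝ) : EReal) := by
      rw [hz]
      exact_mod_cast lt_add_of_pos_right zstar hε
    obtain ⟨t, ht, htlt⟩ := sInf_lt_iff.mp hlt
    obtain ⟨p, ⟨hpM, hpeq⟩, rfl⟩ := ht
    have hplt : c ⬝ᵥ p.1 + d ⬝ᵥ p.2 < zstar + ε := by
      have h' : ((c ⬝ᵥ p.1 + d ⬝ᵥ p.2 : ℝ) : EReal) < ((zstar + ε : ℝ) : EReal) := htlt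
      exact_mod_cast h'
    have hple : ∀ i, A.mulVec p.1 i + G.mulVec p.2 i ≤ b i :=
      fun i => (congrFun hpeq i).le
    have hval : (Aᵀ.mulVec αstar - c) ⬝ᵥ p.1 + (Gᵀ.mulVec αstar - d) ⬝ᵥ p.2
        = b ⬝ᵥ αstar - (c ⬝ᵥ p.1 + d ⬝ᵥ p.2) := by
      rw [sub_dotProduct, sub_dotProduct, transpose_mulVec_dot,
        transpose_mulVec_dot]
      have hsum : αstar ⬝ᵥ A.mulVec p.1 + αstar ⬝ᵥ G.mulVec p.2 = b ⬝ᵥ αstar := by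
        rw [← dotProduct_add, hpeq, dotProduct_comm]
      linarith
    have hmemS : (Aᵀ.mulVec αstar - c) ⬝ᵥ p.1 + (Gᵀ.mulVec αstar - d) ⬝ᵥ p.2 ∈ S :=
      ⟨p, hpM, hple, rfl⟩
    have := le_csSup hbdd hmemS
    linarith
  have hsup : sSup S = b ⬝ᵥ αstar - zstar := le_antisymm hle hge
  rw [hsup, dotProduct_comm αstar b]
  ring
end

section
/- (Strong subadditive duality for conic MIPs.) Let K ⊆ ℝ^{n₁+n₂} be a regular cone and M = K ∩ (ℤ^{n₁} × ℝ^{n₂}). Let A ∈ ℝ^{m×n₁}, G ∈ ℝ^{m×n₂}, b ∈ ℝ^m, c ∈ ℝ^{n₁}, d ∈ ℝ^{n₂}. Assume the conic MIP z* = inf{c^Tx + d^Ty : Ax + Gy = b, (x,y) ∈ M} is feasible, and that the conic dual of its continuous relaxation is feasible, i.e., there exists α ∈ ℝ^m with (c − A^Tα, d − G^Tα) ∈ K_*. Then there exists a subadditive function f : ℝ^m → ℝ with f(0) = 0 and f(Au + Gv) ≤ c^Tu + d^Tv for all (u,v) ∈ M, such that f(b) = z*. -/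
open Matrix

/-- A regular cone in `ℝ^{n₁} × ℝ^{n₂}`: closed, convex, a cone, pointed,
and full-dimensional. -/
def IsRegularConeP {n₁ n₂ : ℕ} (K : Set ((Fin n₁ → ℝ) × (Fin n₂ → ℝ))) : Prop :=
  IsClosed K ∧ Convex ℝ K ∧ (∀ p ∈ K, ∀ t : ℝ, 0 ≤ t → t • p ∈ K) ∧
    K ∩ (-K) = {0} ∧ (interior K).Nonempty

/-- The dual cone of `K ⊆ ℝ^{n₁} × ℝ^{n₂}`. -/
def dualConeP {n₁ n₂ : ℕ} (K : Set ((Fin n₁ → ℝ) × (Fin n₂ → ℝ))) :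
    Set ((Fin n₁ → ℝ) × (Fin n₂ → ℝ)) :=
  {q | ∀ p ∈ K, 0 ≤ p.1 ⬝ᵥ q.1 + p.2 ⬝ᵥ q.2}

/-- Strong subadditive duality for equality-constrained conic MIPs: if the conic dual
of the continuous relaxation is feasible, there is a subadditive dual optimal function. -/
theorem strong_subadditive_duality {n₁ n₂ m : ℕ}
    (K : Set ((Fin n₁ → ℝ) × (Fin n₂ → ℝ))) (hK : IsRegularConeP K)
    (A : Matrix (Fin m) (Fin n₁) ℝ) (G : Matrix (Fin m) (Fin n₂) ℝ)
    (b : Fin m → ℝ) (c : Fin n₁ → ℝ) (d : Fin n₂ → ℝ)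
    (M : Set ((Fin n₁ → ℝ) × (Fin n₂ → ℝ)))
    (hM : M = {p ∈ K | ∀ i, ∃ k : ℤ, p.1 i = (k : ℝ)})
    -- the conic MIP is feasible with (finite) optimal value `zstar`
    (zstar : ℝ)
    (hfeas : ∃ p ∈ M, A.mulVec p.1 + G.mulVec p.2 = b)
    (hz : sInf ((fun p : (Fin n₁ → ℝ) × (Fin n₂ → ℝ) =>
        ((c ⬝ᵥ p.1 + d ⬝ᵥ p.2 : ℝ) : EReal)) ''
        {p ∈ M | A.mulVec p.1 + G.mulVec p.2 = b}) = (zstar : EReal))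
    -- the conic dual of the continuous relaxation is feasible
    (hdualfeas : ∃ α : Fin m → ℝ, (c - Aᵀ.mulVec α, d - Gᵀ.mulVec α) ∈ dualConeP K) :
    ∃ f : (Fin m → ℝ) → ℝ,
      (∀ u v : Fin m → ℝ, f (u + v) ≤ f u + f v) ∧
      f 0 = 0 ∧
      (∀ p ∈ M, f (A.mulVec p.1 + G.mulVec p.2) ≤ c ⬝ᵥ p.1 + d ⬝ᵥ p.2) ∧
      f b = zstar := by
  classical
  obtain ⟨α, hα⟩ := hdualfeas
  obtain ⟨hKcl, hKconv, hKcone, hKpt, hKint⟩ := hK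
  -- 0 ∈ M
  have h0K : (0 : (Fin n₁ → ℝ) × (Fin n₂ → ℝ)) ∈ K := by
    obtain ⟨p0, hp0⟩ := hKint
    have := hKcone p0 (interior_subset hp0) 0 le_rfl
    simpa using this
  have h0M : (0 : (Fin n₁ → ℝ) × (Fin n₂ → ℝ)) ∈ M := by
    rw [hM]
    exact ⟨h0K, fun i => ⟨0, by simp⟩⟩
  -- M is closed under addition
  have hadd : ∀ p q : (Fin n₁ → ℝ) × (Fin n₂ → ℝ), p ∈ M → q ∈ M → p + q ∈ M := by
    intro p q hp hq
    rw [hM] at hp hq ⊢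
    constructor
    · have hmid : (1/2 : ℝ) • p + (1/2 : ℝ) • q ∈ K :=
        hKconv hp.1 hq.1 (by norm_num) (by norm_num) (by norm_num)
      have := hKcone _ hmid 2 (by norm_num)
      have h2 : (2 : ℝ) • ((1/2 : ℝ) • p + (1/2 : ℝ) • q) = p + q := by
        rw [smul_add, smul_smul, smul_smul]
        norm_num
      rwa [h2] at this
    · intro i
      obtain ⟨k, hk⟩ := hp.2 i
      obtain ⟨l, hl⟩ := hq.2 i
      exact ⟨k + l, by simp [hk, hl]⟩
  -- the key dual inequality on K
  have hkey : ∀ p ∈ K, α ⬝ᵥ (A.mulVec p.1 + G.mulVec p.2) ≤ c ⬝ᵥ p.1 + d ⬝ᵥ p.2 := by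
    intro p hp
    have h0 := hα p hp
    have e1 : α ⬝ᵥ A.mulVec p.1 = p.1 ⬝ᵥ Aᵀ.mulVec α := by
      rw [Matrix.mulVec_transpose, Matrix.dotProduct_mulVec, dotProduct_comm]
    have e2 : α ⬝ᵥ G.mulVec p.2 = p.2 ⬝ᵥ Gᵀ.mulVec α := by
      rw [Matrix.mulVec_transpose, Matrix.dotProduct_mulVec, dotProduct_comm]
    have hc : p.1 ⬝ᵥ (c - Aᵀ.mulVec α) = p.1 ⬝ᵥ c - p.1 ⬝ᵥ Aᵀ.mulVec α := dotProduct_sub _ _ _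
    have hd : p.2 ⬝ᵥ (d - Gᵀ.mulVec α) = p.2 ⬝ᵥ d - p.2 ⬝ᵥ Gᵀ.mulVec α := dotProduct_sub _ _ _
    have hcc : p.1 ⬝ᵥ c = c ⬝ᵥ p.1 := dotProduct_comm _ _
    have hdd : p.2 ⬝ᵥ d = d ⬝ᵥ p.2 := dotProduct_comm _ _
    rw [dotProduct_add, e1, e2]
    rw [hc, hd, hcc, hdd] at h0
    linarith
  -- the value-function sets
  set S : (Fin m → ℝ) → Set ℝ := fun r =>
    (fun p : (Fin n₁ → ℝ) × (Fin n₂ → ℝ) => c ⬝ᵥ p.1 + d ⬝ᵥ p.2) ''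
      {p | p ∈ M ∧ A.mulVec p.1 + G.mulVec p.2 = r} with hS
  have hlb : ∀ r : Fin m → ℝ, ∀ x ∈ S r, α ⬝ᵥ r ≤ x := by
    rintro r x ⟨p, ⟨hpM, hpe⟩, rfl⟩
    have hpK : p ∈ K := by rw [hM] at hpM; exact hpM.1
    have := hkey p hpK
    rwa [hpe] at this
  have hbdd : ∀ r, BddBelow (S r) := fun r => ⟨α ⬝ᵥ r, hlb r⟩
  have hSadd : ∀ u v : Fin m → ℝ, (S u).Nonempty → (S v).Nonempty →
      (S (u + v)).Nonempty ∧ sInf (S (u + v)) ≤ sInf (S u) + sInf (S v) := by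
    intro u v hu hv
    have hmem : ∀ x ∈ S u, ∀ y ∈ S v, x + y ∈ S (u + v) := by
      rintro x ⟨p, ⟨hpM, hpe⟩, rfl⟩ y ⟨q, ⟨hqM, hqe⟩, rfl⟩
      refine ⟨p + q, ⟨hadd p q hpM hqM, ?_⟩, ?_⟩
      · show A.mulVec (p.1 + q.1) + G.mulVec (p.2 + q.2) = u + v
        rw [Matrix.mulVec_add, Matrix.mulVec_add, ← hpe, ← hqe]
        abel
      · show c ⬝ᵥ (p.1 + q.1) + d ⬝ᵥ (p.2 + q.2) = _
        rw [dotProduct_add, dotProduct_add]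
        ring
    obtain ⟨x0, hx0⟩ := id hu
    obtain ⟨y0, hy0⟩ := id hv
    refine ⟨⟨x0 + y0, hmem _ hx0 _ hy0⟩, ?_⟩
    have h1 : sInf (S (u + v)) - sInf (S v) ≤ sInf (S u) := by
      apply le_csInf hu
      intro x hx
      have h2 : sInf (S (u + v)) - x ≤ sInf (S v) := by
        apply le_csInf hv
        intro y hy
        have := csInf_le (hbdd (u + v)) (hmem x hx y hy)
        linarith
      linarith
    linarith
  -- the EReal hypothesis gives sInf (S b) = zstar
  have hSb : (S b).Nonempty := by
    obtain ⟨p, hpM, hpe⟩ := hfeas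
    exact ⟨c ⬝ᵥ p.1 + d ⬝ᵥ p.2, ⟨p, ⟨hpM, hpe⟩, rfl⟩⟩
  have hTz : sInf ((fun x : ℝ => (x : EReal)) '' S b) = (zstar : EReal) := by
    rw [hS]
    rw [Set.image_image]
    exact hz
  have hvb : sInf (S b) = zstar := by
    have h1 : ((sInf (S b) : ℝ) : EReal) ≤ (zstar : EReal) := by
      rw [← hTz]
      apply le_sInf
      rintro y ⟨x, hx, rfl⟩
      exact EReal.coe_le_coe_iff.2 (csInf_le (hbdd b) hx)
    have h2 : zstar ≤ sInf (S b) := by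
      apply le_csInf hSb
      intro x hx
      have : (zstar : EReal) ≤ (x : EReal) := by
        rw [← hTz]
        exact sInf_le ⟨x, hx, rfl⟩
      exact_mod_cast this
    have h1' : sInf (S b) ≤ zstar := by exact_mod_cast h1
    linarith
  set Cc : ℝ := zstar - α ⬝ᵥ b with hCc
  have hC : 0 ≤ Cc := by
    have : α ⬝ᵥ b ≤ sInf (S b) := le_csInf hSb (hlb b)
    rw [hvb] at this
    simp [hCc]
    linarith
  -- the subadditive dual function
  set f : (Fin m → ℝ) → ℝ := fun r =>
    if (S r).Nonempty then min (sInf (S r)) (α ⬝ᵥ r + Cc) else α ⬝ᵥ r + Cc with hf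
  have flow : ∀ r, α ⬝ᵥ r ≤ f r := by
    intro r
    simp only [hf]
    split
    · exact le_min (le_csInf ‹_› (hlb r)) (by linarith)
    · linarith
  have fup : ∀ r, f r ≤ α ⬝ᵥ r + Cc := by
    intro r
    simp only [hf]
    split
    · exact min_le_right _ _
    · exact le_rfl
  refine ⟨f, ?_, ?_, ?_, ?_⟩
  · -- subadditivity
    intro u v
    by_cases hu : (S u).Nonempty
    · by_cases hv : (S v).Nonempty
      · obtain ⟨huv, hsum⟩ := hSadd u v hu hv
        have hfu : f u = min (sInf (S u)) (α ⬝ᵥ u + Cc) := by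
          simp only [hf]; rw [if_pos hu]
        have hfv : f v = min (sInf (S v)) (α ⬝ᵥ v + Cc) := by
          simp only [hf]; rw [if_pos hv]
        have hA1 : f (u + v) ≤ sInf (S (u + v)) := by
          simp only [hf]; rw [if_pos huv]; exact min_le_left _ _
        have hA2 : f (u + v) ≤ α ⬝ᵥ (u + v) + Cc := fup _
        have hduv : α ⬝ᵥ (u + v) = α ⬝ᵥ u + α ⬝ᵥ v := dotProduct_add _ _ _
        have hlu : α ⬝ᵥ u ≤ sInf (S u) := le_csInf hu (hlb u)
        have hlv : α ⬝ᵥ v ≤ sInf (S v) := le_csInf hv (hlb v)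
        rw [hfu, hfv]
        rcases min_cases (sInf (S u)) (α ⬝ᵥ u + Cc) with ⟨e1, _⟩ | ⟨e1, _⟩ <;>
          rcases min_cases (sInf (S v)) (α ⬝ᵥ v + Cc) with ⟨e2, _⟩ | ⟨e2, _⟩ <;>
          rw [e1, e2] <;> linarith
      · have hfv : f v = α ⬝ᵥ v + Cc := by simp only [hf]; rw [if_neg hv]
        have hduv : α ⬝ᵥ (u + v) = α ⬝ᵥ u + α ⬝ᵥ v := dotProduct_add _ _ _
        have := fup (u + v)
        have := flow u
        linarith
    · have hfu : f u = α ⬝ᵥ u + Cc := by simp only [hf]; rw [if_neg hu]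
      have hduv : α ⬝ᵥ (u + v) = α ⬝ᵥ u + α ⬝ᵥ v := dotProduct_add _ _ _
      have := fup (u + v)
      have := flow v
      linarith
  · -- f 0 = 0
    have h0S : (0 : ℝ) ∈ S 0 := by
      refine ⟨0, ⟨h0M, by simp⟩, by simp⟩
    have hne : (S 0).Nonempty := ⟨0, h0S⟩
    have h1 : sInf (S 0) ≤ 0 := csInf_le (hbdd 0) h0S
    have h2 : (0 : ℝ) ≤ sInf (S 0) := by
      have := le_csInf hne (hlb 0)
      simpa using this
    have h3 : sInf (S 0) = 0 := le_antisymm h1 h2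
    simp only [hf]
    rw [if_pos hne, h3]
    have h0 : α ⬝ᵥ (0 : Fin m → ℝ) = 0 := by simp
    rw [h0, zero_add, min_eq_left hC]
  · -- f dominated by the objective on M
    intro p hp
    have hmem : c ⬝ᵥ p.1 + d ⬝ᵥ p.2 ∈ S (A.mulVec p.1 + G.mulVec p.2) :=
      ⟨p, ⟨hp, rfl⟩, rfl⟩
    have hne : (S (A.mulVec p.1 + G.mulVec p.2)).Nonempty := ⟨_, hmem⟩
    calc f (A.mulVec p.1 + G.mulVec p.2)
        ≤ sInf (S (A.mulVec p.1 + G.mulVec p.2)) := by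
          simp only [hf]; rw [if_pos hne]; exact min_le_left _ _
      _ ≤ c ⬝ᵥ p.1 + d ⬝ᵥ p.2 := csInf_le (hbdd _) hmem
  · -- f b = zstar
    simp only [hf]
    rw [if_pos hSb, hvb, hCc]
    have : α ⬝ᵥ b + (zstar - α ⬝ᵥ b) = zstar := by ring
    rw [this, min_self]
end

section
/- (Complementary slackness.) Let K ⊆ ℝ^{n₁+n₂} be a regular cone and M = K ∩ (ℤ^{n₁} × ℝ^{n₂}). Let A ∈ ℝ^{m×n₁}, G ∈ ℝ^{m×n₂}, b ∈ ℝ^m, c ∈ ℝ^{n₁}, d ∈ ℝ^{n₂}. Assume the conic MIP z* = inf{c^Tx + d^Ty : Ax + Gy = b, (x,y) ∈ M} is feasible and there exists α ∈ ℝ^m with (c − A^Tα, d − G^Tα) ∈ K_*. Let (x,y) ∈ M satisfy Ax + Gy = b, and let f : ℝ^m → ℝ be subadditive with f(0) = 0 and f(Au + Gv) ≤ c^Tu + d^Tv for all (u,v) ∈ M. Then (x,y) attains z* (i.e., c^Tx + d^Ty = z*) and f is optimal for the subadditive dual (i.e., f(b) = z*) if and only if f(Ax + Gy) = c^Tx +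 d^Ty. -/
open Matrix

/-- Complementary slackness for conic MIPs and their subadditive duals. -/
theorem complementary_slackness {n₁ n₂ m : ℕ}
    (K : Set ((Fin n₁ → ℝ) × (Fin n₂ → ℝ))) (hK : IsRegularConeP K)
    (A : Matrix (Fin m) (Fin n₁) ℝ) (G : Matrix (Fin m) (Fin n₂) ℝ)
    (b : Fin m → ℝ) (c : Fin n₁ → ℝ) (d : Fin n₂ → ℝ)
    (M : Set ((Fin n₁ → ℝ) × (Fin n₂ → ℝ)))
    (hM : M = {p ∈ K | ∀ i, ∃ k : ℤ, p.1 i = (k : ℝ)})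
    -- the conic MIP is feasible with (finite) optimal value `zstar`
    (zstar : ℝ)
    (hfeas : ∃ p ∈ M, A.mulVec p.1 + G.mulVec p.2 = b)
    (hz : sInf ((fun p : (Fin n₁ → ℝ) × (Fin n₂ → ℝ) =>
        ((c ⬝ᵥ p.1 + d ⬝ᵥ p.2 : ℝ) : EReal)) ''
        {p ∈ M | A.mulVec p.1 + G.mulVec p.2 = b}) = (zstar : EReal))
    -- the conic dual of the continuous relaxation is feasible
    (hdualfeas : ∃ α : Fin m → ℝ, (c - Aᵀ.mulVec α, d - Gᵀ.mulVec α) ∈ dualConeP K)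
    -- a primal feasible solution
    (x : Fin n₁ → ℝ) (y : Fin n₂ → ℝ) (hxyM : (x, y) ∈ M)
    (hxyb : A.mulVec x + G.mulVec y = b)
    -- a dual feasible subadditive function
    (f : (Fin m → ℝ) → ℝ)
    (hsub : ∀ u v : Fin m → ℝ, f (u + v) ≤ f u + f v)
    (hf0 : f 0 = 0)
    (hfeasdual : ∀ p ∈ M, f (A.mulVec p.1 + G.mulVec p.2) ≤ c ⬝ᵥ p.1 + d ⬝ᵥ p.2) :
    (c ⬝ᵥ x + d ⬝ᵥ y = zstar ∧ f b = zstar) ↔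
      f (A.mulVec x + G.mulVec y) = c ⬝ᵥ x + d ⬝ᵥ y := by
  constructor
  · rintro ⟨h1, h2⟩
    rw [hxyb, h2, h1]
  · intro h
    rw [hxyb] at h
    -- zstar ≤ c·x + d·y
    have hmem : ((c ⬝ᵥ x + d ⬝ᵥ y : ℝ) : EReal) ∈
        ((fun p : (Fin n₁ → ℝ) × (Fin n₂ → ℝ) =>
          ((c ⬝ᵥ p.1 + d ⬝ᵥ p.2 : ℝ) : EReal)) ''
          {p ∈ M | A.mulVec p.1 + G.mulVec p.2 = b}) :=
      ⟨(x, y), ⟨hxyM, hxyb⟩, rfl⟩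
    have hle1 : (zstar : EReal) ≤ ((c ⬝ᵥ x + d ⬝ᵥ y : ℝ) : EReal) := by
      rw [← hz]; exact sInf_le hmem
    have hle1' : zstar ≤ c ⬝ᵥ x + d ⬝ᵥ y := by exact_mod_cast hle1
    -- f b ≤ zstar (weak duality)
    have hle2 : ((f b : ℝ) : EReal) ≤ (zstar : EReal) := by
      rw [← hz]
      apply le_sInf
      rintro a ⟨p, ⟨hpM, hpb⟩, rfl⟩
      have := hfeasdual p hpM
      rw [hpb] at this
      simp only []
      exact_mod_cast this
    have hle2' : f b ≤ zstar := by exact_mod_cast hle2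
    have : c ⬝ᵥ x + d ⬝ᵥ y = zstar := le_antisymm (h ▸ hle2') hle1'
    exact ⟨this, h.trans this⟩
end

section
/- Let K ⊆ ℝ^n be a cone (closed under multiplication by nonnegative scalars), let g : ℝ^m → ℝ be a subadditive function with g(0) = 0, and let N ∈ ℝ^{m×n} and e ∈ ℝ^n. Then g(Nv) ≤ e^Tv for all v ∈ K if and only if ḡ(Nv) ≤ e^Tv for all v ∈ K, where ḡ(x) := limsup_{δ→0⁺} g(δx)/δ (valued in ℝ ∪ {±∞}). -/
/-!
Subadditivity gives `g x ≤ k * g (k⁻¹ • x)`, so `g x ≤ g (δ • x) / δ` along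
`δ = 1/k → 0⁺` and hence `g ≤ ḡ`; this is the "if" direction. Conversely, since `K` is a cone,
`g (N (δ • v)) ≤ eᵀ(δ • v) = δ * eᵀv` for every `δ > 0`, so every difference quotient
`g (δ • N v) / δ` is bounded by `eᵀv`.
-/

open Matrix Filter Topology

theorem le_nsmul_mul_of_subadditive {M : Type*} [AddMonoid M] {g : M → ℝ}
    (hsub : ∀ u v, g (u + v) ≤ g u + g v) (hg0 : g 0 = 0) (k : ℕ) (y : M) :
    g (k • y) ≤ k * g y := by
  induction k with
  | zero => simp [hg0]
  | succ k ih =>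
    calc g ((k + 1) • y) = g (k • y + y) := by rw [succ_nsmul]
      _ ≤ g (k • y) + g y := hsub _ _
      _ ≤ k * g y + g y := by linarith
      _ = (k + 1 : ℕ) * g y := by push_cast; ring

section Real

variable {E : Type*} [AddCommMonoid E] [Module ℝ E] {g : E → ℝ}

theorem le_div_smul_inv_natCast_add_one_of_subadditive
    (hsub : ∀ u v, g (u + v) ≤ g u + g v) (hg0 : g 0 = 0) (x : E) (k : ℕ) :
    g x ≤ g (((k : ℝ) + 1)⁻¹ • x) / ((k : ℝ) + 1)⁻¹ := by
  have hk : (k : ℝ) + 1 ≠ 0 := by positivity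
  have h := le_nsmul_mul_of_subadditive hsub hg0 (k + 1) (((k : ℝ) + 1)⁻¹ • x)
  rw [← Nat.cast_smul_eq_nsmul ℝ, smul_smul, Nat.cast_add_one, mul_inv_cancel₀ hk,
    one_smul] at h
  rwa [div_inv_eq_mul, mul_comm]

theorem le_limsup_div_smul_of_subadditive
    (hsub : ∀ u v, g (u + v) ≤ g u + g v) (hg0 : g 0 = 0) (x : E) :
    ((g x : ℝ) : EReal) ≤
      limsup (fun δ : ℝ => ((g (δ • x) / δ : ℝ) : EReal)) (𝓝[>] 0) := by
  have hinv : Tendsto (fun k : ℕ => ((k : ℝ) + 1)⁻¹) atTop (𝓝[>] 0) :=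
    tendsto_inv_atTop_nhdsGT_zero.comp
      (tendsto_atTop_add_const_right _ 1 tendsto_natCast_atTop_atTop)
  refine le_limsup_of_frequently_le (hinv.frequently (Frequently.of_forall fun k => ?_))
  exact EReal.coe_le_coe_iff.2 (le_div_smul_inv_natCast_add_one_of_subadditive hsub hg0 x k)

end Real

theorem limsup_div_le_of_le_mul {φ : ℝ → ℝ} {c : ℝ} (h : ∀ δ > 0, φ δ ≤ δ * c) :
    limsup (fun δ : ℝ => ((φ δ / δ : ℝ) : EReal)) (𝓝[>] 0) ≤ c := by
  refine limsup_le_of_le (by isBoundedDefault) ?_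
  filter_upwards [self_mem_nhdsWithin] with δ hδ
  exact EReal.coe_le_coe_iff.2 ((div_le_iff₀ hδ).2 (by linarith [h δ hδ]))

/-- For a subadditive `g` with `g(0) = 0`, a cone `K`, a matrix `N` and vector `e`:
`g(Nv) ≤ eᵀv` on `K` iff `ḡ(Nv) ≤ eᵀv` on `K`, where
`ḡ(x) = limsup_{δ→0⁺} g(δx)/δ` (valued in the extended reals). -/
theorem g_iff_gbar {m n : ℕ} (K : Set (Fin n → ℝ))
    (hK : ∀ v ∈ K, ∀ t : ℝ, 0 ≤ t → t • v ∈ K)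
    (g : (Fin m → ℝ) → ℝ)
    (hsub : ∀ u v : Fin m → ℝ, g (u + v) ≤ g u + g v)
    (hg0 : g 0 = 0)
    (N : Matrix (Fin m) (Fin n) ℝ) (e : Fin n → ℝ) :
    (∀ v ∈ K, g (N.mulVec v) ≤ e ⬝ᵥ v) ↔
      (∀ v ∈ K,
        Filter.limsup (fun δ : ℝ => ((g (δ • N.mulVec v) / δ : ℝ) : EReal))
            (nhdsWithin 0 (Set.Ioi 0)) ≤ ((e ⬝ᵥ v : ℝ) : EReal)) := by
  constructor
  · intro h v hv
    refine limsup_div_le_of_le_mul fun δ hδ => ?_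
    simpa only [mulVec_smul, dotProduct_smul, smul_eq_mul] using h (δ • v) (hK v hv δ hδ.le)
  · intro h v hv
    exact EReal.coe_le_coe_iff.1 ((le_limsup_div_smul_of_subadditive hsub hg0 _).trans (h v hv))
end

section
/- Let K₁ ⊆ ℝ^{n₁} and K₂ ⊆ ℝ^{n₂} be regular cones, M = (K₁ ∩ ℤ^{n₁}) × K₂, A ∈ ℝ^{m×n₁}, G ∈ ℝ^{m×n₂}, c ∈ ℝ^{n₁}, d ∈ ℝ^{n₂}. Let I(M) be a generating set of M, I₁ a generating set of K₁ ∩ ℤ^{n₁}, and I₂ a generating set of K₂ (with nonnegative-integer coefficients). Let f : ℝ^m → ℝ be subadditive with f(0) = 0. Then f(Au + Gv) ≤ c^Tu + d^Tv for all (u,v) ∈ I(M) if and only if both f(Au) ≤ c^Tu for all u ∈ I₁ and f̄(Gv) ≤ d^Tv for all v ∈ I₂, where f̄(x) := limsup_{δ→0⁺} f(δx)/δ. -/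
open Matrix

/-!
A bound `f (g x) ≤ φ x` with `f` subadditive and `g`, `φ` additive holds on a whole monoid as soon
as it holds on a generating set. For `⇒`, the points `(u, 0)` and `(0, δ • v)` (any `δ > 0`) lie in
`M`, which gives `f (A u) ≤ cᵀu` and `f (δ • G v) / δ ≤ dᵀv`. For `⇐`, subadditivity gives
`f ≤ f̄`, so both factors satisfy their bound on their whole monoid, and
`f (A u + G v) ≤ f (A u) + f (G v)`.
-/

open Filter Topology

section IsRegularCone

variable {k : ℕ} {C : Set (Fin k → ℝ)}

theorem IsRegularCone.smul_mem (hC : IsRegularCone C) {x : Fin k → ℝ} (hx : x ∈ C) {t : ℝ}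
    (ht : 0 ≤ t) : t • x ∈ C :=
  hC.2.2.1 x hx t ht

theorem IsRegularCone.zero_mem (hC : IsRegularCone C) : (0 : Fin k → ℝ) ∈ C := by
  obtain ⟨x, hx⟩ := hC.2.2.2.2
  simpa using hC.smul_mem (interior_subset hx) le_rfl

end IsRegularCone

theorem IsGenSet.comp_le_of_forall_mem {V W : Type*} [AddCommMonoid V] [Module ℝ V]
    [AddCommMonoid W] {M I : Set V} (hI : IsGenSet M I) {f : W → ℝ}
    (hsub : ∀ u v, f (u + v) ≤ f u + f v) (hf0 : f 0 = 0) (g : V →+ W) (φ : V →+ ℝ)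
    (hle : ∀ x ∈ I, f (g x) ≤ φ x) : ∀ x ∈ M, f (g x) ≤ φ x := by
  let S : AddSubmonoid V :=
    { carrier := {x | f (g x) ≤ φ x}
      zero_mem' := by simp [hf0]
      add_mem' := fun {a b} ha hb => by
        simp only [Set.mem_ofPred_eq, map_add] at ha hb ⊢
        linarith [hsub (g a) (g b)] }
  intro w hw
  obtain ⟨p, h, lam, hhI, rfl⟩ := hI.2 w hw
  exact S.sum_mem fun i _ => by rw [Nat.cast_smul_eq_nsmul]; exact S.nsmul_mem (hle _ (hhI i)) _

/-- The paper's `f̄`. -/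
noncomputable def upperDirDerivAtZero {E : Type*} [AddCommGroup E] [Module ℝ E]
    (f : E → ℝ) (x : E) : EReal :=
  limsup (fun δ : ℝ => ((f (δ • x) / δ : ℝ) : EReal)) (𝓝[>] 0)

section upperDirDerivAtZero

variable {E : Type*} [AddCommGroup E] [Module ℝ E] {f : E → ℝ}

theorem upperDirDerivAtZero_le_of_forall {x : E} {a : ℝ}
    (h : ∀ δ : ℝ, 0 < δ → f (δ • x) ≤ δ * a) : upperDirDerivAtZero f x ≤ a :=
  limsup_le_of_le (by isBoundedDefault) <| eventually_nhdsWithin_of_forall fun δ hδ =>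
    EReal.coe_le_coe_iff.2 <| (div_le_iff₀' hδ).2 (h δ hδ)

/-- Along `δ = 1/(n+1)` subadditivity gives `f x ≤ (n+1) f(δx) = f(δx)/δ`. -/
theorem le_upperDirDerivAtZero (hsub : ∀ u v, f (u + v) ≤ f u + f v) (hf0 : f 0 = 0) (x : E) :
    (f x : EReal) ≤ upperDirDerivAtZero f x := by
  have htend : Tendsto (fun n : ℕ => (1 : ℝ) / (n + 1)) atTop (𝓝[>] 0) :=
    tendsto_nhdsWithin_of_tendsto_nhds_of_eventually_within _
      tendsto_one_div_add_atTop_nhds_zero_nat (Eventually.of_forall fun n => by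
        simp only [Set.mem_Ioi]; positivity)
  refine le_limsup_of_frequently_le (htend.frequently (Frequently.of_forall fun n => ?_))
    (by isBoundedDefault)
  set δ : ℝ := 1 / (n + 1)
  have hx : x = ∑ _i ∈ Finset.range (n + 1), δ • x := by
    rw [Finset.sum_const, Finset.card_range, ← Nat.cast_smul_eq_nsmul ℝ, smul_smul]
    push_cast
    rw [mul_one_div_cancel (by positivity), one_smul]
  have hle : f x ≤ f (δ • x) / δ := by
    calc f x = f (∑ _i ∈ Finset.range (n + 1), δ • x) := congrArg f hx
      _ ≤ ∑ _i ∈ Finset.range (n + 1), f (δ • x) := Finset.le_sum_of_subadditive f hf0.le hsub _ _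
      _ = f (δ • x) / δ := by simp [δ, mul_comm]
  exact EReal.coe_le_coe_iff.2 hle

end upperDirDerivAtZero

/-- Equivalence of the dual constraints over a generating set of
`M = (K₁ ∩ ℤ^{n₁}) × K₂` with the split constraints over generating sets of the
two factors (the continuous part using `f̄(x) = limsup_{δ→0⁺} f(δx)/δ`). -/
theorem dual_constraints_split {n₁ n₂ m : ℕ}
    (K₁ : Set (Fin n₁ → ℝ)) (K₂ : Set (Fin n₂ → ℝ))
    (hK₁ : IsRegularCone K₁) (hK₂ : IsRegularCone K₂)
    (A : Matrix (Fin m) (Fin n₁) ℝ) (G : Matrix (Fin m) (Fin n₂) ℝ)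
    (c : Fin n₁ → ℝ) (d : Fin n₂ → ℝ)
    (M : Set ((Fin n₁ → ℝ) × (Fin n₂ → ℝ)))
    (hM : M = {x ∈ K₁ | ∀ i, ∃ k : ℤ, x i = (k : ℝ)} ×ˢ K₂)
    (I : Set ((Fin n₁ → ℝ) × (Fin n₂ → ℝ))) (hI : IsGenSet M I)
    (I₁ : Set (Fin n₁ → ℝ)) (I₂ : Set (Fin n₂ → ℝ))
    (hI₁ : IsGenSet {x ∈ K₁ | ∀ i, ∃ k : ℤ, x i = (k : ℝ)} I₁)
    (hI₂ : IsGenSet K₂ I₂)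
    (f : (Fin m → ℝ) → ℝ)
    (hsub : ∀ u v : Fin m → ℝ, f (u + v) ≤ f u + f v)
    (hf0 : f 0 = 0) :
    (∀ p ∈ I, f (A.mulVec p.1 + G.mulVec p.2) ≤ c ⬝ᵥ p.1 + d ⬝ᵥ p.2) ↔
      ((∀ u ∈ I₁, f (A.mulVec u) ≤ c ⬝ᵥ u) ∧
        (∀ v ∈ I₂,
          Filter.limsup (fun δ : ℝ => ((f (δ • G.mulVec v) / δ : ℝ) : EReal))
              (nhdsWithin 0 (Set.Ioi 0)) ≤ ((d ⬝ᵥ v : ℝ) : EReal))) := by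
  constructor
  · intro hle
    have hMle := hI.comp_le_of_forall_mem hsub hf0
      (A.mulVecLin.coprod G.mulVecLin).toAddMonoidHom
      ((dotProductBilin ℝ ℝ c).coprod (dotProductBilin ℝ ℝ d)).toAddMonoidHom (by simpa using hle)
    refine ⟨fun u hu => ?_, fun v hv => upperDirDerivAtZero_le_of_forall fun δ hδ => ?_⟩
    · simpa [hf0] using hMle (u, 0) (hM ▸ ⟨hI₁.1 hu, hK₂.zero_mem⟩)
    · have h0 : (0 : Fin n₁ → ℝ) ∈ {x ∈ K₁ | ∀ i, ∃ k : ℤ, x i = (k : ℝ)} :=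
        ⟨hK₁.zero_mem, fun _ => ⟨0, by simp⟩⟩
      simpa [mulVec_smul] using hMle (0, δ • v) (hM ▸ ⟨h0, hK₂.smul_mem (hI₂.1 hv) hδ.le⟩)
  · rintro ⟨h₁, h₂⟩ p hp
    obtain ⟨hp₁, hp₂⟩ : p ∈ _ ×ˢ _ := hM ▸ hI.1 hp
    have hA := hI₁.comp_le_of_forall_mem hsub hf0 A.mulVecLin.toAddMonoidHom
      (dotProductBilin ℝ ℝ c).toAddMonoidHom (by simpa using h₁) p.1 hp₁
    have hG := hI₂.comp_le_of_forall_mem hsub hf0 G.mulVecLin.toAddMonoidHom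
      (dotProductBilin ℝ ℝ d).toAddMonoidHom
      (fun v hv => EReal.coe_le_coe_iff.1 ((le_upperDirDerivAtZero hsub hf0 _).trans (h₂ v hv)))
      p.2 hp₂
    simp only [LinearMap.toAddMonoidHom_coe, mulVecLin_apply, dotProductBilin_apply_apply] at hA hG
    exact (hsub _ _).trans (add_le_add hA hG)
end

section
/- (Generator function reduction for conic MIPs with block structure.) For ℓ = 1,…,L, let K^ℓ ⊆ ℝ^{n₁^ℓ + n₂^ℓ} be a regular cone, A^ℓ ∈ ℝ^{m×n₁^ℓ}, G^ℓ ∈ ℝ^{m×n₂^ℓ}, c^ℓ ∈ ℝ^{n₁^ℓ}, d^ℓ ∈ ℝ^{n₂^ℓ}, and let a_i^ℓ, g_i^ℓ denote the i-th rows of A^ℓ, G^ℓ. Fix α ∈ ℝ^m and ω ∈ ℝ^m, and let E' = {ℓ : (c^ℓ, d^ℓ) − [A^ℓ; G^ℓ]^Tα ∈ K^ℓ_* and (a_i^ℓ, g_i^ℓ) ∈ K^ℓ_* for all i = 1,…,m}. Then the supremum of Σ_{ℓ=1}^L [((A^ℓ)^Tα − c^ℓ)^T x^ℓ + ((G^ℓ)^Tα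 − d^ℓ)^T y^ℓ] over all (x^ℓ, y^ℓ) ∈ K^ℓ ∩ (ℤ^{n₁^ℓ} × ℝ^{n₂^ℓ}), ℓ = 1,…,L, with Σ_{ℓ=1}^L (A^ℓ x^ℓ + G^ℓ y^ℓ) ≤ ω, is unchanged if one additionally imposes (x^ℓ, y^ℓ) = 0 for every ℓ ∈ E'. -/
open Matrix

/-!
On a block `ℓ ∈ E'` every feasible `(x ℓ, y ℓ) ∈ K ℓ` pairs nonnegatively with each row
`(a_i^ℓ, g_i^ℓ)` and nonpositively with the objective vector, because these vectors lie in the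
dual cone. Replacing such blocks by `0` (which lies in the cone) therefore only loosens the
constraints, keeps integrality, and does not decrease the objective; so each feasible value is
dominated by a feasible value of the restricted problem.
-/

section Piecewise

variable {ι : Type*} {β γ : ι → Type*} [∀ i, Zero (β i)] [∀ i, Zero (γ i)]
  (E : Set ι) [DecidablePred (· ∈ E)] (x : ∀ i, β i) (y : ∀ i, γ i)

lemma piecewise_zero_of_forall (P : ∀ i, β i → γ i → Prop) (hE : ∀ i ∈ E, P i 0 0)
    (h : ∀ i, P i (x i) (y i)) (i : ι) :
    P i (E.piecewise (0 : ∀ i, β i) x i) (E.piecewise (0 : ∀ i, γ i) y i) := by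
  by_cases hi : i ∈ E
  · simpa [Set.piecewise_eq_of_mem _ _ _ hi] using hE i hi
  · simpa [Set.piecewise_eq_of_notMem _ _ _ hi] using h i

variable [Fintype ι] (f : ∀ i, β i → γ i → ℝ)

lemma sum_piecewise_zero_le (hf : ∀ i, f i 0 0 = 0) (hE : ∀ i ∈ E, 0 ≤ f i (x i) (y i)) :
    ∑ i, f i (E.piecewise (0 : ∀ i, β i) x i) (E.piecewise (0 : ∀ i, γ i) y i) ≤
      ∑ i, f i (x i) (y i) := by
  refine Finset.sum_le_sum fun i _ => ?_
  by_cases hi : i ∈ E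
  · simpa [Set.piecewise_eq_of_mem _ _ _ hi, hf] using hE i hi
  · simp [Set.piecewise_eq_of_notMem _ _ _ hi]

lemma le_sum_piecewise_zero (hf : ∀ i, f i 0 0 = 0) (hE : ∀ i ∈ E, f i (x i) (y i) ≤ 0) :
    ∑ i, f i (x i) (y i) ≤
      ∑ i, f i (E.piecewise (0 : ∀ i, β i) x i) (E.piecewise (0 : ∀ i, γ i) y i) := by
  have := sum_piecewise_zero_le E x y (fun i a b => -f i a b) (by simp [hf])
    (fun i hi => neg_nonneg.mpr (hE i hi))
  simpa only [Finset.sum_neg_distrib, neg_le_neg_iff] using this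

end Piecewise

section DualCone

variable {m n₁ n₂ : ℕ} {K : Set ((Fin n₁ → ℝ) × (Fin n₂ → ℝ))}

lemma IsRegularConeP.zero_mem (hK : IsRegularConeP K) {p} (hp : p ∈ K) : 0 ∈ K := by
  simpa using hK.2.2.1 p hp 0 le_rfl

lemma row_nonneg_of_mem_dualConeP (A : Matrix (Fin m) (Fin n₁) ℝ)
    (G : Matrix (Fin m) (Fin n₂) ℝ) (i : Fin m)
    (hrow : (fun j => A i j, fun j => G i j) ∈ dualConeP K) {x y} (hxy : (x, y) ∈ K) :
    0 ≤ (A *ᵥ x) i + (G *ᵥ y) i := by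
  simpa [mulVec, dotProduct_comm] using hrow (x, y) hxy

lemma objective_nonpos_of_mem_dualConeP (A : Matrix (Fin m) (Fin n₁) ℝ)
    (G : Matrix (Fin m) (Fin n₂) ℝ) (c : Fin n₁ → ℝ) (d : Fin n₂ → ℝ) (α : Fin m → ℝ)
    (hobj : (c - Aᵀ *ᵥ α, d - Gᵀ *ᵥ α) ∈ dualConeP K) {x y} (hxy : (x, y) ∈ K) :
    (Aᵀ *ᵥ α - c) ⬝ᵥ x + (Gᵀ *ᵥ α - d) ⬝ᵥ y ≤ 0 := by
  have h := hobj (x, y) hxy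
  rw [← neg_sub c, ← neg_sub d, neg_dotProduct, neg_dotProduct, dotProduct_comm _ x,
    dotProduct_comm _ y]
  linarith

end DualCone

/-- Generator function reduction for conic MIPs with block structure: the supremum
defining the generator function is unchanged when the blocks in `E'` are forced to `0`. -/
theorem generator_block_reduction {L m : ℕ} (n₁ n₂ : Fin L → ℕ)
    (K : ∀ ℓ, Set ((Fin (n₁ ℓ) → ℝ) × (Fin (n₂ ℓ) → ℝ)))
    (hK : ∀ ℓ, IsRegularConeP (K ℓ))
    (A : ∀ ℓ, Matrix (Fin m) (Fin (n₁ ℓ)) ℝ) (G : ∀ ℓ, Matrix (Fin m) (Fin (n₂ ℓ)) ℝ)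
    (c : ∀ ℓ, Fin (n₁ ℓ) → ℝ) (d : ∀ ℓ, Fin (n₂ ℓ) → ℝ)
    (α ω : Fin m → ℝ)
    (E' : Set (Fin L))
    (hE' : E' = {ℓ | (c ℓ - (A ℓ)ᵀ.mulVec α, d ℓ - (G ℓ)ᵀ.mulVec α) ∈ dualConeP (K ℓ) ∧
      ∀ i : Fin m, ((fun j => A ℓ i j, fun j => G ℓ i j) ∈ dualConeP (K ℓ))}) :
    sSup ((fun z : ℝ => (z : EReal)) '' {z : ℝ |
        ∃ (x : ∀ ℓ, Fin (n₁ ℓ) → ℝ) (y : ∀ ℓ, Fin (n₂ ℓ) → ℝ),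
          (∀ ℓ, (x ℓ, y ℓ) ∈ K ℓ) ∧ (∀ ℓ, ∀ i, ∃ k : ℤ, x ℓ i = (k : ℝ)) ∧
          (∀ i, ∑ ℓ, ((A ℓ).mulVec (x ℓ) i + (G ℓ).mulVec (y ℓ) i) ≤ ω i) ∧
          z = ∑ ℓ, (((A ℓ)ᵀ.mulVec α - c ℓ) ⬝ᵥ x ℓ + ((G ℓ)ᵀ.mulVec α - d ℓ) ⬝ᵥ y ℓ)}) =
      sSup ((fun z : ℝ => (z : EReal)) '' {z : ℝ |
        ∃ (x : ∀ ℓ, Fin (n₁ ℓ) → ℝ) (y : ∀ ℓ, Fin (n₂ ℓ) → ℝ),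
          (∀ ℓ, (x ℓ, y ℓ) ∈ K ℓ) ∧ (∀ ℓ, ∀ i, ∃ k : ℤ, x ℓ i = (k : ℝ)) ∧
          (∀ i, ∑ ℓ, ((A ℓ).mulVec (x ℓ) i + (G ℓ).mulVec (y ℓ) i) ≤ ω i) ∧
          (∀ ℓ ∈ E', x ℓ = 0 ∧ y ℓ = 0) ∧
          z = ∑ ℓ, (((A ℓ)ᵀ.mulVec α - c ℓ) ⬝ᵥ x ℓ + ((G ℓ)ᵀ.mulVec α - d ℓ) ⬝ᵥ y ℓ)}) := by
  classical
  refine csSup_eq_csSup_of_forall_exists_le ?_ ?_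
  · rintro _ ⟨_, ⟨x, y, hxy, hint, hcon, rfl⟩, rfl⟩
    refine ⟨_, ⟨_, ⟨E'.piecewise 0 x, E'.piecewise 0 y, fun ℓ => ?_, fun ℓ i => ?_,
      fun i => ?_, fun ℓ hℓ => ?_, rfl⟩, rfl⟩, EReal.coe_le_coe_iff.mpr ?_⟩
    · exact piecewise_zero_of_forall E' x y (fun ℓ u v => (u, v) ∈ K ℓ)
        (fun ℓ _ => (hK ℓ).zero_mem (hxy ℓ)) hxy ℓ
    · exact piecewise_zero_of_forall E' x y (fun ℓ u _ => ∀ j, ∃ k : ℤ, u j = k)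
        (fun _ _ _ => ⟨0, by simp⟩) hint ℓ i
    · refine le_trans (sum_piecewise_zero_le E' x y
        (fun ℓ u v => (A ℓ *ᵥ u) i + (G ℓ *ᵥ v) i) (by simp) fun ℓ hℓ => ?_) (hcon i)
      exact row_nonneg_of_mem_dualConeP _ _ i ((hE' ▸ hℓ).2 i) (hxy ℓ)
    · simp [Set.piecewise_eq_of_mem _ _ _ hℓ]
    · exact le_sum_piecewise_zero E' x y
        (fun ℓ u v => ((A ℓ)ᵀ *ᵥ α - c ℓ) ⬝ᵥ u + ((G ℓ)ᵀ *ᵥ α - d ℓ) ⬝ᵥ v) (by simp)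
        fun ℓ hℓ => objective_nonpos_of_mem_dualConeP _ _ _ _ α (hE' ▸ hℓ).1 (hxy ℓ)
  · rintro _ ⟨_, ⟨x, y, hxy, hint, hcon, -, rfl⟩, rfl⟩
    exact ⟨_, ⟨_, ⟨x, y, hxy, hint, hcon, rfl⟩, rfl⟩, le_rfl⟩
end
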